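/- arXiv:2508.21133 — 13 statements merged into one kernel-verified Lean document; each statement's English description precedes it below -/
import Mathlib

section
/- The function g attains its infimum on D: there exists a pair (c₁*, c₂*) ∈ D such that g(c₁*, c₂*) ≤ g(c₁, c₂) for all (c₁, c₂) ∈ D. (In particular, the infimum of g over D is not approached only as c₁ → ∞, as c₂ → ∞, or as (c₁,c₂) approaches the line c₂ = c₁ + β.) -/
/-!
Outside a suitable compact box inside `D = impulseDomain β`, the ratio `g = impulseRatio H β`
is at least its value `m = H(β + 1) - H 0` at `(0, β + 1)`, so its minimum over the box is a minimum over `D`.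
There are three ways to leave the box. Far to the right, `H' ≥ m + 1` and the mean value
theorem bounds the numerator below by `(m + 1)(c₂ - c₁)`. If `c₁` stays bounded while `c₂` grows,
the numerator grows like `(m + 1) c₂` while the denominator is at most `c₂`. Near the line
`c₂ = c₁ + β` the denominator tends to `0`, while the numerator is at least
`H(c₁ + β) - H c₁`, which has a positive lower bound on bounded sets by strict monotonicity.
-/

open Set Filter

theorem IsCompact.exists_isMinOn_of_le_of_notMem {α β : Type*} [LinearOrder α]
    [TopologicalSpace α] [ClosedIicTopology α] [TopologicalSpace β] {f : β → α} {s k : Set β}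
    (hk : IsCompact k) (hks : k ⊆ s) (hf : ContinuousOn f k) {x₀ : β} (hx₀ : x₀ ∈ k)
    (hout : ∀ x ∈ s \ k, f x₀ ≤ f x) : ∃ x ∈ s, IsMinOn f s x := by
  obtain ⟨x, hxk, hxmin⟩ := hk.exists_isMinOn ⟨x₀, hx₀⟩ hf
  refine ⟨x, hks hxk, fun y hy => ?_⟩
  by_cases hyk : y ∈ k
  exacts [hxmin hyk, (hxmin hx₀).trans (hout y ⟨hy, hyk⟩)]

noncomputable def impulseRatio (H : ℝ → ℝ) (β : ℝ) (p : ℝ × ℝ) : ℝ :=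
  (H p.2 - H p.1) / (p.2 - p.1 - β)

def impulseDomain (β : ℝ) : Set (ℝ × ℝ) :=
  {p | 0 ≤ p.1 ∧ p.1 + β < p.2}

section

variable {H H' : ℝ → ℝ} {β : ℝ}

theorem continuousOn_impulseRatio (hH : ContinuousOn H (Ici 0)) (hβ : 0 ≤ β) :
    ContinuousOn (impulseRatio H β) (impulseDomain β) := by
  refine ContinuousOn.div ?_ (by fun_prop) fun p hp => (sub_pos.2 (by linarith [hp.2])).ne'
  refine (hH.comp continuous_snd.continuousOn fun p hp => ?_).sub
    (hH.comp continuous_fst.continuousOn fun p hp => hp.1)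
  exact (show (0 : ℝ) ≤ p.2 by linarith [hp.1, hp.2])

theorem strictMonoOn_Ici_of_hasDerivAt_pos (hH : ContinuousOn H (Ici 0))
    (hHderiv : ∀ x ∈ Ioi (0 : ℝ), HasDerivAt H (H' x) x) (hH'pos : ∀ x ∈ Ioi (0 : ℝ), 0 < H' x) :
    StrictMonoOn H (Ici 0) := by
  refine strictMonoOn_of_hasDerivWithinAt_pos (f' := H') (convex_Ici 0) hH (fun x hx => ?_) ?_
  · rw [interior_Ici] at hx ⊢
    exact (hHderiv x hx).hasDerivWithinAt
  · simpa only [interior_Ici] using hH'pos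

theorem exists_forall_mul_sub_le_sub_of_tendsto_atTop
    (hHderiv : ∀ x ∈ Ioi (0 : ℝ), HasDerivAt H (H' x) x) (hH'top : Tendsto H' atTop atTop)
    (K : ℝ) : ∃ M ≥ 0, ∀ a b, M ≤ a → a ≤ b → K * (b - a) ≤ H b - H a := by
  obtain ⟨M₀, hM₀⟩ := eventually_atTop.1 (hH'top.eventually_ge_atTop K)
  have hpos : ∀ x ∈ Ici (max M₀ 1), x ∈ Ioi (0 : ℝ) := fun x hx =>
    mem_Ioi.2 (one_pos.trans_le ((le_max_right _ _).trans hx))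
  have hdiff : DifferentiableOn ℝ H (Ici (max M₀ 1)) := fun x hx =>
    (hHderiv x (hpos x hx)).differentiableAt.differentiableWithinAt
  refine ⟨max M₀ 1, zero_le_one.trans (le_max_right _ _), fun a b ha hab => ?_⟩
  refine (convex_Ici _).mul_sub_le_image_sub_of_le_deriv hdiff.continuousOn
    (hdiff.mono interior_subset) (fun x hx => ?_) a ha b (ha.trans hab) hab
  rw [interior_Ici] at hx
  rw [(hHderiv x (hpos x (mem_Ici.2 hx.le))).deriv]
  exact hM₀ x ((le_max_left _ _).trans hx.le)

theorem exists_pos_le_sub_shift (hH : ContinuousOn H (Ici 0)) (hmono : StrictMonoOn H (Ici 0))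
    (hβ : 0 < β) (M : ℝ) : ∃ δ > 0, ∀ x ∈ Icc 0 M, δ ≤ H (x + β) - H x := by
  have hcont : ContinuousOn (fun x => H (x + β) - H x) (Icc 0 M) :=
    (hH.comp (by fun_prop) fun x hx => (show (0 : ℝ) ≤ x + β by linarith [hx.1])).sub
      (hH.mono fun x hx => hx.1)
  refine isCompact_Icc.exists_forall_le' hcont fun x hx => sub_pos.2 ?_
  exact hmono hx.1 (show (0 : ℝ) ≤ x + β by linarith [hx.1]) (by linarith)

theorem le_impulseRatio_of_notMem_box {m M N δ ε : ℝ} {d : ℝ × ℝ}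
    (hmono : MonotoneOn H (Ici 0)) (hm : 0 ≤ m) (hβ : 0 ≤ β) (hM : 0 ≤ M)
    (hgrowth : ∀ a b, M ≤ a → a ≤ b → (m + 1) * (b - a) ≤ H b - H a)
    (hgap : ∀ x ∈ Icc 0 M, δ ≤ H (x + β) - H x) (hεδ : m * ε ≤ δ) (hN : (m + 1) * M ≤ N)
    (hd : d ∈ impulseDomain β) (hout : d ∉ Icc 0 M ×ˢ Icc 0 N ∩ {p | p.1 + β + ε ≤ p.2}) :
    m ≤ impulseRatio H β d := by
  obtain ⟨d₁, d₂⟩ := d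
  obtain ⟨hd₁ : 0 ≤ d₁, hd₁₂ : d₁ + β < d₂⟩ := hd
  rw [impulseRatio, le_div_iff₀ (by linarith)]
  by_cases hd₁M : d₁ ≤ M
  · by_cases hd₂N : d₂ ≤ N
    · have hnear : d₂ < d₁ + β + ε := by
        by_contra h
        exact hout ⟨⟨⟨hd₁, hd₁M⟩, ⟨by linarith, hd₂N⟩⟩, not_lt.1 h⟩
      have hshift : H (d₁ + β) ≤ H d₂ :=
        hmono (show (0 : ℝ) ≤ d₁ + β by linarith) (show (0 : ℝ) ≤ d₂ by linarith) hd₁₂.le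
      calc m * (d₂ - d₁ - β) ≤ m * ε := by gcongr; linarith
        _ ≤ δ := hεδ
        _ ≤ H (d₁ + β) - H d₁ := hgap d₁ ⟨hd₁, hd₁M⟩
        _ ≤ H d₂ - H d₁ := by linarith
    · have hHM : H d₁ ≤ H M := hmono hd₁ hM hd₁M
      have := hgrowth M d₂ le_rfl (by nlinarith)
      nlinarith
  · have := hgrowth d₁ d₂ (by linarith) (by linarith)
    nlinarith

end

theorem stmt_0_general
    (H H' : ℝ → ℝ)
    (hHcont : ContinuousOn H (Set.Ici 0))
    (hHderiv : ∀ x ∈ Set.Ioi (0:ℝ), HasDerivAt H (H' x) x)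
    (hH'pos : ∀ x ∈ Set.Ioi (0:ℝ), 0 < H' x)
    (hH'top : Filter.Tendsto H' Filter.atTop Filter.atTop)
    (β : ℝ) (hβ : 0 < β)
    :
    ∃ c₁ c₂ : ℝ, (0 ≤ c₁ ∧ c₁ + β < c₂) ∧
      ∀ d₁ d₂ : ℝ, 0 ≤ d₁ → d₁ + β < d₂ →
        (H c₂ - H c₁) / (c₂ - c₁ - β) ≤ (H d₂ - H d₁) / (d₂ - d₁ - β) := by
  have hmono := strictMonoOn_Ici_of_hasDerivAt_pos hHcont hHderiv hH'pos
  set m := H (β + 1) - H 0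
  have hm : 0 < m := sub_pos.2 (hmono self_mem_Ici (by simp only [mem_Ici]; linarith) (by linarith))
  obtain ⟨M, hM, hgrowth⟩ :=
    exists_forall_mul_sub_le_sub_of_tendsto_atTop hHderiv hH'top (m + 1)
  obtain ⟨δ, hδ, hgap⟩ := exists_pos_le_sub_shift hHcont hmono hβ M
  set ε := min 1 (δ / m)
  have hεδ : m * ε ≤ δ := (le_div_iff₀' hm).1 (min_le_right _ _)
  set box := Icc 0 M ×ˢ Icc 0 ((m + 1) * M + β + 1) ∩ {p : ℝ × ℝ | p.1 + β + ε ≤ p.2}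
  have hbox : box ⊆ impulseDomain β := fun p hp =>
    ⟨hp.1.1.1, by linarith [hp.2.out, lt_min one_pos (div_pos hδ hm)]⟩
  have hbase : ((0 : ℝ), β + 1) ∈ box := by
    refine ⟨⟨⟨le_rfl, hM⟩, ⟨by linarith, by nlinarith⟩⟩, ?_⟩
    show 0 + β + ε ≤ β + 1
    linarith [min_le_left 1 (δ / m)]
  have hbase_val : impulseRatio H β (0, β + 1) = m := by
    rw [impulseRatio, sub_zero, add_sub_cancel_left, div_one]
  obtain ⟨c, hc, hcmin⟩ := IsCompact.exists_isMinOn_of_le_of_notMem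
    ((isCompact_Icc.prod isCompact_Icc).inter_right (isClosed_le (by fun_prop) (by fun_prop)))
    hbox ((continuousOn_impulseRatio hHcont hβ.le).mono hbox) hbase fun d ⟨hd, hdbox⟩ =>
      hbase_val ▸ le_impulseRatio_of_notMem_box hmono.monotoneOn hm.le hβ.le hM hgrowth hgap hεδ
        (by linarith) hd hdbox
  exact ⟨c.1, c.2, hc, fun d₁ d₂ h₁ h₂ => hcmin (show (d₁, d₂) ∈ impulseDomain β from ⟨h₁, h₂⟩)⟩

theorem stmt_0
    (H H' : ℝ → ℝ)
    (hHcont : ContinuousOn H (Set.Ici 0))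
    (hHderiv : ∀ x ∈ Set.Ioi (0:ℝ), HasDerivAt H (H' x) x)
    (hH'pos : ∀ x ∈ Set.Ioi (0:ℝ), 0 < H' x)
    (hH'cont : ContinuousOn H' (Set.Ici 0))
    (hH'top : Filter.Tendsto H' Filter.atTop Filter.atTop)
    (β : ℝ) (hβ : 0 < β)
    :
    ∃ c₁ c₂ : ℝ, (0 ≤ c₁ ∧ c₁ + β < c₂) ∧
      ∀ d₁ d₂ : ℝ, 0 ≤ d₁ → d₁ + β < d₂ →
        (H c₂ - H c₁) / (c₂ - c₁ - β) ≤ (H d₂ - H d₁) / (d₂ - d₁ - β) :=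
  stmt_0_general H H' hHcont hHderiv hH'pos hH'top β hβ
end

section
/- If (c₁*, c₂*) ∈ D minimizes g over D, then either c₁* = 0 or H'(c₁*) = H'(c₂*). -/
theorem stmt_2
    (H H' : ℝ → ℝ)
    (hHcont : ContinuousOn H (Set.Ici 0))
    (hHderiv : ∀ x ∈ Set.Ioi (0:ℝ), HasDerivAt H (H' x) x)
    (hH'pos : ∀ x ∈ Set.Ioi (0:ℝ), 0 < H' x)
    (hH'cont : ContinuousOn H' (Set.Ici 0))
    (hH'top : Filter.Tendsto H' Filter.atTop Filter.atTop)
    (β : ℝ) (hβ : 0 < β)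
    (c₁ c₂ : ℝ) (hc₁ : 0 ≤ c₁) (hc₂ : c₁ + β < c₂)
    (hmin : ∀ d₁ d₂ : ℝ, 0 ≤ d₁ → d₁ + β < d₂ →
      (H c₂ - H c₁) / (c₂ - c₁ - β) ≤ (H d₂ - H d₁) / (d₂ - d₁ - β))
    :
    c₁ = 0 ∨ H' c₁ = H' c₂ := by
  rcases eq_or_lt_of_le hc₁ with h0 | h1pos
  · exact Or.inl h0.symm
  right
  have hd : (0:ℝ) < c₂ - c₁ - β := by linarith
  have hc₂pos : (0:ℝ) < c₂ := by linarith
  set A : ℝ := (H c₂ - H c₁) / (c₂ - c₁ - β) with hA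
  -- slice in the first variable
  have hφmin : IsLocalMin (fun t => (H c₂ - H t) / (c₂ - t - β)) c₁ := by
    have hmem : Set.Ioo (0:ℝ) (c₂ - β) ∈ nhds c₁ :=
      Ioo_mem_nhds h1pos (by linarith)
    filter_upwards [hmem] with t ht
    exact hmin t c₂ ht.1.le (by linarith [ht.2])
  have hφderiv : HasDerivAt (fun t => (H c₂ - H t) / (c₂ - t - β))
      (((-H' c₁) * (c₂ - c₁ - β) - (H c₂ - H c₁) * (-1)) / (c₂ - c₁ - β) ^ 2) c₁ := by
    have h1 : HasDerivAt (fun t => H c₂ - H t) (-H' c₁) c₁ :=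
      ((hHderiv c₁ h1pos).const_sub (H c₂)).congr_deriv (by ring)
    have h2 : HasDerivAt (fun t => c₂ - t - β) (-1) c₁ := by
      simpa using (((hasDerivAt_id c₁).const_sub c₂).sub_const β)
    exact h1.div h2 hd.ne'
  have hφ0 := hφmin.hasDerivAt_eq_zero hφderiv
  have hH'c₁ : H' c₁ = A := by
    rw [div_eq_zero_iff] at hφ0
    rcases hφ0 with h | h
    · rw [hA, eq_div_iff hd.ne']
      nlinarith
    · exact absurd h (pow_ne_zero 2 hd.ne')
  -- slice in the second variable
  have hψmin : IsLocalMin (fun s => (H s - H c₁) / (s - c₁ - β)) c₂ := by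
    have hmem : Set.Ioi (c₁ + β) ∈ nhds c₂ := Ioi_mem_nhds hc₂
    filter_upwards [hmem] with s hs
    exact hmin c₁ s hc₁ hs
  have hψderiv : HasDerivAt (fun s => (H s - H c₁) / (s - c₁ - β))
      ((H' c₂ * (c₂ - c₁ - β) - (H c₂ - H c₁) * 1) / (c₂ - c₁ - β) ^ 2) c₂ := by
    have h1 : HasDerivAt (fun s => H s - H c₁) (H' c₂) c₂ :=
      (hHderiv c₂ hc₂pos).sub_const (H c₁)
    have h2 : HasDerivAt (fun s => s - c₁ - β) 1 c₂ := by
      simpa using (((hasDerivAt_id c₂).sub_const c₁).sub_const β)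
    exact h1.div h2 hd.ne'
  have hψ0 := hψmin.hasDerivAt_eq_zero hψderiv
  have hH'c₂ : H' c₂ = A := by
    rw [div_eq_zero_iff] at hψ0
    rcases hψ0 with h | h
    · rw [hA, eq_div_iff hd.ne']
      nlinarith
    · exact absurd h (pow_ne_zero 2 hd.ne')
  rw [hH'c₁, hH'c₂]
end

section
/- Let (c₁*, c₂*) ∈ D minimize g over D, and define v : [0,∞) → ℝ by v(x) = H(x)/H'(c₂*) for 0 ≤ x ≤ c₂* and v(x) = x − c₂* + H(c₂*)/H'(c₂*) for x > c₂*. Then v(x) − v(y) ≥ x − y − β for all x ≥ y ≥ 0. -/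
theorem stmt_3
    (H H' : ℝ → ℝ)
    (hHcont : ContinuousOn H (Set.Ici 0))
    (hHderiv : ∀ x ∈ Set.Ioi (0:ℝ), HasDerivAt H (H' x) x)
    (hH'pos : ∀ x ∈ Set.Ioi (0:ℝ), 0 < H' x)
    (hH'cont : ContinuousOn H' (Set.Ici 0))
    (hH'top : Filter.Tendsto H' Filter.atTop Filter.atTop)
    (β : ℝ) (hβ : 0 < β)
    (c₁ c₂ : ℝ) (hc₁ : 0 ≤ c₁) (hc₂ : c₁ + β < c₂)
    (hmin : ∀ d₁ d₂ : ℝ, 0 ≤ d₁ → d₁ + β < d₂ →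
      (H c₂ - H c₁) / (c₂ - c₁ - β) ≤ (H d₂ - H d₁) / (d₂ - d₁ - β))
    :
    ∀ x y : ℝ, 0 ≤ y → y ≤ x →
      (if x ≤ c₂ then H x / H' c₂ else x - c₂ + H c₂ / H' c₂) -
        (if y ≤ c₂ then H y / H' c₂ else y - c₂ + H c₂ / H' c₂) ≥ x - y - β := by
  have hc₂pos : (0:ℝ) < c₂ := by linarith
  have hKpos : 0 < H' c₂ := hH'pos c₂ hc₂pos
  have hden : (0:ℝ) < c₂ - c₁ - β := by linarith
  -- H is monotone on [0,∞)
  have hmono : MonotoneOn H (Set.Ici 0) := by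
    have hs : StrictMonoOn H (Set.Ici 0) := by
      apply strictMonoOn_of_deriv_pos (convex_Ici 0) hHcont
      intro x hx
      rw [interior_Ici] at hx
      rw [(hHderiv x hx).deriv]
      exact hH'pos x hx
    exact hs.monotoneOn
  -- first order condition in c₂
  have hfoc : H' c₂ * (c₂ - c₁ - β) = H c₂ - H c₁ := by
    have hd : HasDerivAt (fun t => (H t - H c₁) / (t - c₁ - β))
        ((H' c₂ * (c₂ - c₁ - β) - (H c₂ - H c₁) * 1) / (c₂ - c₁ - β) ^ 2) c₂ := by
      exact HasDerivAt.div ((hHderiv c₂ hc₂pos).sub_const _)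
        (((hasDerivAt_id c₂).sub_const _).sub_const _) (by linarith)
    have hloc : IsLocalMin (fun t => (H t - H c₁) / (t - c₁ - β)) c₂ := by
      have : ∀ᶠ t in nhds c₂, (H c₂ - H c₁) / (c₂ - c₁ - β) ≤ (H t - H c₁) / (t - c₁ - β) := by
        filter_upwards [Ioi_mem_nhds (show c₁ + β < c₂ from hc₂)] with t ht
        exact hmin c₁ t hc₁ ht
      exact this
    have hz := hloc.hasDerivAt_eq_zero hd
    have hnum : H' c₂ * (c₂ - c₁ - β) - (H c₂ - H c₁) * 1 = 0 := by
      rcases div_eq_zero_iff.mp hz with h | h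
      · exact h
      · exact absurd h (by positivity)
    linarith
  -- key inequality
  have key : ∀ y x : ℝ, 0 ≤ y → y ≤ x → H' c₂ * (x - y - β) ≤ H x - H y := by
    intro y x hy hyx
    rcases le_or_gt (x - y) β with h | h
    · have hHle : H y ≤ H x := hmono hy (le_trans hy hyx) hyx
      nlinarith
    · have hg := hmin y x hy (by linarith)
      rw [div_le_div_iff₀ hden (by linarith)] at hg
      nlinarith
  intro x y hy hyx
  by_cases hxc : x ≤ c₂ <;> by_cases hyc : y ≤ c₂ <;>
    simp only [hxc, hyc, if_true, if_false, if_pos, if_neg, not_false_iff]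
  · have hk := key y x hy hyx
    rw [ge_iff_le, div_sub_div_same, le_div_iff₀ hKpos]
    nlinarith
  · exact absurd (le_trans hyx hxc) hyc
  · have hk := key y c₂ hy hyc
    have e : H c₂ / H' c₂ - H y / H' c₂ = (H c₂ - H y) / H' c₂ := (sub_div _ _ _).symm
    have hdiv : c₂ - y - β ≤ (H c₂ - H y) / H' c₂ := by
      rw [le_div_iff₀ hKpos]; nlinarith
    rw [ge_iff_le]; linarith
  · rw [ge_iff_le]; linarith
end

section
/- If (c₁*, c₂*) ∈ D minimizes g over D, then c₂* > a*; moreover, if c₁* > 0 then c₁* < a*. -/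
theorem stmt_4
    (H H' : ℝ → ℝ)
    (hHcont : ContinuousOn H (Set.Ici 0))
    (hHderiv : ∀ x ∈ Set.Ioi (0:ℝ), HasDerivAt H (H' x) x)
    (hH'pos : ∀ x ∈ Set.Ioi (0:ℝ), 0 < H' x)
    (hH'cont : ContinuousOn H' (Set.Ici 0))
    (hH'top : Filter.Tendsto H' Filter.atTop Filter.atTop)
    (β : ℝ) (hβ : 0 < β)
    (astar : ℝ) (hastar : 0 ≤ astar)
    (hH'dec : StrictAntiOn H' (Set.Ioo 0 astar))
    (hH'inc : StrictMonoOn H' (Set.Ioi astar))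
    (c₁ c₂ : ℝ) (hc₁ : 0 ≤ c₁) (hc₂ : c₁ + β < c₂)
    (hmin : ∀ d₁ d₂ : ℝ, 0 ≤ d₁ → d₁ + β < d₂ →
      (H c₂ - H c₁) / (c₂ - c₁ - β) ≤ (H d₂ - H d₁) / (d₂ - d₁ - β))
    :
    astar < c₂ ∧ (0 < c₁ → c₁ < astar) := by
  have hden : (0:ℝ) < c₂ - c₁ - β := by linarith
  have hdne : (c₂ - c₁ - β) ≠ 0 := ne_of_gt hden
  have hc₂pos : (0:ℝ) < c₂ := by linarith
  have hc12 : c₁ < c₂ := by linarith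
  -- L1 : boundary monotonicity at astar from the left
  have L1 : ∀ t ∈ Set.Ioo (0:ℝ) astar, H' astar ≤ H' t := by
    intro t ht
    have hsub : Set.Ioo t astar ⊆ Set.Ici (0:ℝ) := fun s hs => le_of_lt (ht.1.trans hs.1)
    have htend : Filter.Tendsto H' (nhdsWithin astar (Set.Ioo t astar)) (nhds (H' astar)) :=
      ((hH'cont astar hastar).mono hsub)
    have hclos : astar ∈ closure (Set.Ioo t astar) := by
      rw [closure_Ioo (ne_of_lt ht.2)]
      exact ⟨le_of_lt ht.2, le_refl _⟩
    have hne := mem_closure_iff_nhdsWithin_neBot.1 hclos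
    refine le_of_tendsto htend ?_
    filter_upwards [self_mem_nhdsWithin] with s hs
    exact le_of_lt (hH'dec ht ⟨ht.1.trans hs.1, hs.2⟩ hs.1)
  -- L2 : boundary monotonicity at astar from the right
  have L2 : ∀ t ∈ Set.Ioi astar, H' astar ≤ H' t := by
    intro t ht
    have hsub : Set.Ioo astar t ⊆ Set.Ici (0:ℝ) := fun s hs => le_of_lt (lt_of_le_of_lt hastar hs.1)
    have htend : Filter.Tendsto H' (nhdsWithin astar (Set.Ioo astar t)) (nhds (H' astar)) :=
      ((hH'cont astar hastar).mono hsub)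
    have hclos : astar ∈ closure (Set.Ioo astar t) := by
      rw [closure_Ioo (ne_of_lt ht)]
      exact ⟨le_refl _, le_of_lt ht⟩
    have hne := mem_closure_iff_nhdsWithin_neBot.1 hclos
    refine le_of_tendsto htend ?_
    filter_upwards [self_mem_nhdsWithin] with s hs
    exact le_of_lt (hH'inc hs.1 ht hs.2)
  -- Mean value theorem
  obtain ⟨ξ, hξ, hξslope⟩ :=
    exists_hasDerivAt_eq_slope H H' hc12
      (hHcont.mono (fun x hx => le_trans hc₁ hx.1))
      (fun x hx => hHderiv x (lt_of_le_of_lt hc₁ hx.1))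
  have hξpos : 0 < ξ := lt_of_le_of_lt hc₁ hξ.1
  have hξH'pos : 0 < H' ξ := hH'pos ξ hξpos
  have hslope : H c₂ - H c₁ = H' ξ * (c₂ - c₁) := by
    rw [eq_div_iff (ne_of_gt (show (0:ℝ) < c₂ - c₁ by linarith))] at hξslope
    linarith [hξslope]
  -- First order condition in c₂
  have hfoc2 : H' c₂ * (c₂ - c₁ - β) = H c₂ - H c₁ := by
    have hD2 : HasDerivAt (fun x => (H x - H c₁) / (x - c₁ - β))
        ((H' c₂ * (c₂ - c₁ - β) - (H c₂ - H c₁) * 1) / (c₂ - c₁ - β)^2) c₂ := by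
      have h1 : HasDerivAt (fun x => H x - H c₁) (H' c₂) c₂ :=
        (hHderiv c₂ hc₂pos).sub_const _
      have h2 : HasDerivAt (fun x : ℝ => x - c₁ - β) 1 c₂ := by
        simpa using ((hasDerivAt_id c₂).sub_const c₁).sub_const β
      exact h1.div h2 hdne
    have hloc : IsLocalMin (fun x => (H x - H c₁) / (x - c₁ - β)) c₂ := by
      filter_upwards [Ioi_mem_nhds hc₂] with x hx
      exact hmin c₁ x hc₁ hx
    have h0 := hloc.hasDerivAt_eq_zero hD2
    rw [div_eq_zero_iff] at h0
    rcases h0 with h0 | h0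
    · linarith
    · exact absurd h0 (pow_ne_zero 2 hdne)
  -- Part 1 : astar < c₂
  have part1 : astar < c₂ := by
    by_contra hcon
    push_neg at hcon
    have hlt : H' c₂ < H' ξ := by
      rcases eq_or_lt_of_le hcon with heq | hlt'
      · -- c₂ = astar
        have hm : (ξ + c₂)/2 ∈ Set.Ioo (0:ℝ) astar := by
          constructor <;> [linarith [hξ.2]; linarith [hξ.2, hcon]]
        calc H' c₂ = H' astar := by rw [heq]
          _ ≤ H' ((ξ + c₂)/2) := L1 _ hm
          _ < H' ξ := hH'dec ⟨hξpos, by linarith [hξ.2, hcon]⟩ hm (by linarith [hξ.2])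
      · exact hH'dec ⟨hξpos, lt_of_lt_of_le hξ.2 hcon⟩ ⟨hc₂pos, hlt'⟩ hξ.2
    nlinarith [mul_lt_mul_of_pos_right hlt hden,
      mul_lt_mul_of_pos_left (show c₂ - c₁ - β < c₂ - c₁ by linarith) hξH'pos]
  refine ⟨part1, fun hc₁pos => ?_⟩
  -- First order condition in c₁
  have hfoc1 : H' c₁ * (c₂ - c₁ - β) = H c₂ - H c₁ := by
    have hD1 : HasDerivAt (fun x => (H c₂ - H x) / (c₂ - x - β))
        (((-H' c₁) * (c₂ - c₁ - β) - (H c₂ - H c₁) * (-1)) / (c₂ - c₁ - β)^2) c₁ := by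
      have h1 : HasDerivAt (fun x => H c₂ - H x) (-H' c₁) c₁ :=
        (hHderiv c₁ hc₁pos).const_sub _
      have h2 : HasDerivAt (fun x : ℝ => c₂ - x - β) (-1) c₁ := by
        simpa using (((hasDerivAt_id c₁).const_sub c₂).sub_const β)
      exact h1.div h2 hdne
    have hloc : IsLocalMin (fun x => (H c₂ - H x) / (c₂ - x - β)) c₁ := by
      filter_upwards [Ioo_mem_nhds hc₁pos (show c₁ < c₂ - β by linarith)] with x hx
      exact hmin x c₂ (le_of_lt hx.1) (by linarith [hx.2])
    have h0 := hloc.hasDerivAt_eq_zero hD1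
    rw [div_eq_zero_iff] at h0
    rcases h0 with h0 | h0
    · linarith
    · exact absurd h0 (pow_ne_zero 2 hdne)
  -- Part 2
  by_contra hcon
  push_neg at hcon
  have hlt : H' c₁ < H' ξ := by
    rcases eq_or_lt_of_le hcon with heq | hlt'
    · -- c₁ = astar
      have hm : (c₁ + ξ)/2 ∈ Set.Ioi astar := by
        simp only [Set.mem_Ioi]; linarith [hξ.1]
      calc H' c₁ = H' astar := by rw [heq]
        _ ≤ H' ((c₁ + ξ)/2) := L2 _ hm
        _ < H' ξ := hH'inc hm (by simp only [Set.mem_Ioi]; linarith [hξ.1]) (by linarith [hξ.1])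
    · exact hH'inc (Set.mem_Ioi.2 hlt') (Set.mem_Ioi.2 (lt_of_lt_of_le hlt' (le_of_lt hξ.1))) hξ.1
  nlinarith [mul_lt_mul_of_pos_right hlt hden,
    mul_lt_mul_of_pos_left (show c₂ - c₁ - β < c₂ - c₁ by linarith) hξH'pos]
end

section
/- The function g has exactly one minimizer on D: there is a unique pair (c₁*, c₂*) ∈ D such that g(c₁*, c₂*) ≤ g(c₁, c₂) for all (c₁, c₂) ∈ D. -/
/-!
A minimizer exists because `g` is continuous and large near the boundary of `D`: close to the
diagonal `c₂ = c₁ + β` the numerator stays above a positive constant, and at infinity `H` grows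
superlinearly.

For uniqueness let `m` be the minimal value. Then `x ↦ H x - m x` drops by at most `m β` between
the two points of any admissible pair and by exactly `m β` at a minimizer `(c₁, c₂)`, so `c₂` is
an interior minimum and `c₁` a maximum of it on `[0, c₂ - β)`. Hence `H' c₂ = m`, and `H' c₁ = m`
unless `c₁ = 0`, where still `H' 0 ≤ m`. The shape of `H'` forces `c₁ ≤ a* < c₂`, and strict
monotonicity of `H'` on either side of `a*` recovers both coordinates from `m`.
-/

open Set Filter Topology

section ClosureOfInterval

variable {α β : Type*} [LinearOrder α] [TopologicalSpace α] [OrderTopology α]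
  [DenselyOrdered α] [LinearOrder β] [TopologicalSpace β] [OrderClosedTopology β]
  {f : α → β} {a b : α}

theorem StrictMonoOn.Icc_of_Ioo (hf : StrictMonoOn f (Ioo a b))
    (hc : ContinuousOn f (Icc a b)) :
    StrictMonoOn f (Icc a b) := by
  intro x hx y hy hxy
  obtain ⟨u, hxu, huy⟩ := exists_between hxy
  obtain ⟨v, huv, hvy⟩ := exists_between huy
  have hu : u ∈ Ioo a b := ⟨hx.1.trans_lt hxu, huy.trans_le hy.2⟩
  have hv : v ∈ Ioo a b := ⟨hu.1.trans huv, hvy.trans_le hy.2⟩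
  have hfxu : f x ≤ f u := by
    have := left_nhdsWithin_Ioo_neBot hxu
    exact le_of_tendsto ((hc x hx).mono (Ioo_subset_Icc_self.trans (Icc_subset_Icc hx.1 hu.2.le)))
      (eventually_nhdsWithin_of_forall fun w (hw : w ∈ Ioo x u) =>
        (hf ⟨hx.1.trans_lt hw.1, hw.2.trans hu.2⟩ hu hw.2).le)
  have hfvy : f v ≤ f y := by
    have := right_nhdsWithin_Ioo_neBot hvy
    exact ge_of_tendsto ((hc y hy).mono (Ioo_subset_Icc_self.trans (Icc_subset_Icc hv.1.le hy.2)))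
      (eventually_nhdsWithin_of_forall fun w (hw : w ∈ Ioo v y) =>
        (hf hv ⟨hv.1.trans hw.1, hw.2.trans_le hy.2⟩ hw.1).le)
  exact hfxu.trans_lt ((hf hu hv huv).trans_le hfvy)

theorem StrictAntiOn.Icc_of_Ioo (hf : StrictAntiOn f (Ioo a b))
    (hc : ContinuousOn f (Icc a b)) :
    StrictAntiOn f (Icc a b) :=
  StrictMonoOn.Icc_of_Ioo (β := βᵒᵈ) hf hc

theorem StrictMonoOn.Ici_of_Ioi (hf : StrictMonoOn f (Ioi a)) (hc : ContinuousOn f (Ici a)) :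
    StrictMonoOn f (Ici a) := fun _ hx _ _ hxy =>
  (hf.mono Ioo_subset_Ioi_self).Icc_of_Ioo (hc.mono Icc_subset_Ici_self) ⟨hx, hxy.le⟩
    ⟨hx.trans hxy.le, le_rfl⟩ hxy

end ClosureOfInterval

theorem IsCompact.exists_isMinOn_of_le_outside {X α : Type*} [TopologicalSpace X] [LinearOrder α]
    [TopologicalSpace α] [ClosedIicTopology α] {f : X → α} {s K : Set X} (hK : IsCompact K)
    (hKs : K ⊆ s) (hf : ContinuousOn f K) {x₀ : X} (hx₀ : x₀ ∈ K)
    (hout : ∀ x ∈ s \ K, f x₀ ≤ f x) : ∃ x ∈ s, IsMinOn f s x := by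
  obtain ⟨x, hxK, hxmin⟩ := hK.exists_isMinOn ⟨x₀, hx₀⟩ hf
  refine ⟨x, hKs hxK, fun y hy => ?_⟩
  by_cases hyK : y ∈ K
  exacts [hxmin hyK, (hxmin hx₀).trans (hout y ⟨hy, hyK⟩)]

section MeanValue

variable {H H' : ℝ → ℝ}

theorem exists_sub_eq_deriv_mul (hHcont : ContinuousOn H (Ici 0))
    (hHderiv : ∀ x ∈ Ioi (0 : ℝ), HasDerivAt H (H' x) x) {x y : ℝ} (hx : 0 ≤ x)
    (hxy : x < y) :
    ∃ ξ ∈ Ioo x y, H y - H x = H' ξ * (y - x) := by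
  obtain ⟨ξ, hξ, hslope⟩ := exists_hasDerivAt_eq_slope H H' hxy
    (hHcont.mono fun z hz => hx.trans hz.1) fun z hz => hHderiv z (hx.trans_lt hz.1)
  exact ⟨ξ, hξ, by rw [hslope, div_mul_cancel₀ _ (sub_ne_zero.2 hxy.ne')]⟩

theorem mul_sub_lt_sub_of_lt_deriv (hHcont : ContinuousOn H (Ici 0))
    (hHderiv : ∀ x ∈ Ioi (0 : ℝ), HasDerivAt H (H' x) x) {m x y : ℝ} (hx : 0 ≤ x)
    (hxy : x < y) (hm : ∀ ξ ∈ Ioo x y, m < H' ξ) : m * (y - x) < H y - H x := by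
  obtain ⟨ξ, hξ, heq⟩ := exists_sub_eq_deriv_mul hHcont hHderiv hx hxy
  rw [heq]
  exact mul_lt_mul_of_pos_right (hm ξ hξ) (sub_pos.2 hxy)

theorem mul_sub_le_sub_of_le_deriv (hHcont : ContinuousOn H (Ici 0))
    (hHderiv : ∀ x ∈ Ioi (0 : ℝ), HasDerivAt H (H' x) x) {m x y : ℝ} (hx : 0 ≤ x)
    (hxy : x < y) (hm : ∀ ξ ∈ Ioo x y, m ≤ H' ξ) : m * (y - x) ≤ H y - H x := by
  obtain ⟨ξ, hξ, heq⟩ := exists_sub_eq_deriv_mul hHcont hHderiv hx hxy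
  rw [heq]
  exact mul_le_mul_of_nonneg_right (hm ξ hξ) (sub_pos.2 hxy).le

theorem strictMonoOn_Ici_of_deriv_pos (hHcont : ContinuousOn H (Ici 0))
    (hHderiv : ∀ x ∈ Ioi (0 : ℝ), HasDerivAt H (H' x) x)
    (hH'pos : ∀ x ∈ Ioi (0 : ℝ), 0 < H' x) :
    StrictMonoOn H (Ici 0) := fun x hx _ _ hxy => by
  simpa using mul_sub_lt_sub_of_lt_deriv hHcont hHderiv (m := 0) hx hxy
    fun ξ hξ => hH'pos ξ (hx.trans_lt hξ.1)

theorem exists_mul_sub_le_sub_of_tendsto_atTop (hHcont : ContinuousOn H (Ici 0))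
    (hHderiv : ∀ x ∈ Ioi (0 : ℝ), HasDerivAt H (H' x) x) (hH'top : Tendsto H' atTop atTop)
    (C : ℝ) :
    ∃ R, ∀ x y, R ≤ x → x < y → C * (y - x) ≤ H y - H x := by
  obtain ⟨R, hR⟩ := eventually_atTop.1 (hH'top.eventually_ge_atTop C)
  exact ⟨max R 0, fun x y hx hxy => mul_sub_le_sub_of_le_deriv hHcont hHderiv
    (le_of_max_le_right hx) hxy fun ξ hξ => hR ξ ((le_of_max_le_left hx).trans hξ.1.le)⟩

theorem HasDerivAt.sub_const_mul {f : ℝ → ℝ} {f' x : ℝ} (hf : HasDerivAt f f' x) (m : ℝ) :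
    HasDerivAt (fun t => f t - m * t) (f' - m) x := by
  have := hf.sub ((hasDerivAt_id' x).const_mul m)
  rwa [mul_one] at this

end MeanValue

/-- The function `g` of the statement. -/
noncomputable def costRatio (H : ℝ → ℝ) (β c₁ c₂ : ℝ) : ℝ := (H c₂ - H c₁) / (c₂ - c₁ - β)

def IsCostRatioMinimizer (H : ℝ → ℝ) (β : ℝ) (p : ℝ × ℝ) : Prop :=
  (0 ≤ p.1 ∧ p.1 + β < p.2) ∧
    ∀ d₁ d₂ : ℝ, 0 ≤ d₁ → d₁ + β < d₂ → costRatio H β p.1 p.2 ≤ costRatio H β d₁ d₂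

theorem costRatio_add_add (H : ℝ → ℝ) (β c h : ℝ) :
    costRatio H β c (c + β + h) = (H (c + β + h) - H c) / h := by
  rw [costRatio]
  congr 1
  ring

section Existence

variable {H : ℝ → ℝ} {β : ℝ}

theorem exists_pos_forall_le_sub_add (hβ : 0 < β) (hcont : ContinuousOn H (Ici 0))
    (hmono : StrictMonoOn H (Ici 0)) (R : ℝ) :
    ∃ δ > 0, ∀ s ∈ Icc 0 R, δ ≤ H (s + β) - H s := by
  have hshift : MapsTo (· + β) (Icc 0 R) (Ici 0) := fun s hs => by
    simp only [mem_Ici]; linarith [hs.1]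
  exact isCompact_Icc.exists_forall_le'
    ((hcont.comp (continuous_add_const β).continuousOn hshift).sub
      (hcont.mono Icc_subset_Ici_self))
    fun s hs => sub_pos.2 (hmono hs.1 (hshift hs) (lt_add_of_pos_right s hβ))

/-- Here `(c, h)` stands for the pair `(c, c + β + h)`. Far out the bound comes from superlinear
growth, near the diagonal from the numerator staying above `δ`. -/
theorem mul_le_sub_of_notMem_box (hmono : StrictMonoOn H (Ici 0)) {M R δ ε c h : ℝ}
    (hM : 0 < M) (hβ : 0 ≤ β) (hR : 0 ≤ R)
    (hgrowth : ∀ x y, R ≤ x → x < y → 2 * M * (y - x) ≤ H y - H x)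
    (hδ : ∀ s ∈ Icc 0 R, δ ≤ H (s + β) - H s) (hε : M * ε ≤ δ) (hc : 0 ≤ c) (hh : 0 < h)
    (hbox : (c, h) ∉ Icc 0 R ×ˢ Icc ε (2 * R)) :
    M * h ≤ H (c + β + h) - H c := by
  rcases lt_or_ge R c with hcR | hcR
  · have := hgrowth c (c + β + h) hcR.le (by linarith)
    nlinarith
  rcases lt_or_ge (2 * R) h with hhR | hhR
  · have h₁ : H c ≤ H R := hmono.monotoneOn hc hR hcR
    have h₂ := hgrowth R (c + β + h) le_rfl (by linarith)
    nlinarith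
  have hhε : h < ε := by
    by_contra! hεh
    exact hbox ⟨⟨hc, hcR⟩, hεh, hhR⟩
  have h₁ : H (c + β) ≤ H (c + β + h) :=
    hmono.monotoneOn (by simp only [mem_Ici]; linarith) (by simp only [mem_Ici]; linarith)
      (by linarith)
  have h₂ := hδ c ⟨hc, hcR⟩
  nlinarith

theorem exists_isCostRatioMinimizer (hβ : 0 < β) (hcont : ContinuousOn H (Ici 0))
    (hmono : StrictMonoOn H (Ici 0))
    (hgrowth : ∀ C, ∃ R, ∀ x y, R ≤ x → x < y → C * (y - x) ≤ H y - H x) :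
    ∃ p, IsCostRatioMinimizer H β p := by
  set G : ℝ × ℝ → ℝ := fun q => (H (q.1 + β + q.2) - H q.1) / q.2
  set M := G (0, β)
  have hM : 0 < M := div_pos (sub_pos.2 (hmono self_mem_Ici (by simp only [mem_Ici]; linarith)
    (by linarith))) hβ
  obtain ⟨R₀, hR₀⟩ := hgrowth (2 * M)
  set R := max R₀ β
  have hR : β ≤ R := le_max_right R₀ β
  obtain ⟨δ, hδ, hδR⟩ := exists_pos_forall_le_sub_add hβ hcont hmono R
  set ε := min β (δ / M)
  have hε : 0 < ε := lt_min hβ (div_pos hδ hM)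
  have hεδ : M * ε ≤ δ := (le_div_iff₀' hM).1 (min_le_right β (δ / M))
  set K := Icc 0 R ×ˢ Icc ε (2 * R)
  have hKs : K ⊆ Ici 0 ×ˢ Ioi 0 := prod_mono Icc_subset_Ici_self fun h hh => hε.trans_le hh.1
  have hGcont : ContinuousOn G K := by
    refine ((hcont.comp (by fun_prop) fun q hq => ?_).sub
      (hcont.comp continuous_fst.continuousOn fun q hq => (hKs hq).1)).div
      continuous_snd.continuousOn fun q hq => (hKs hq).2.ne'
    have := hKs hq
    simp only [mem_prod, mem_Ici, mem_Ioi] at this ⊢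
    linarith
  have h₀K : ((0 : ℝ), β) ∈ K := ⟨⟨le_rfl, hβ.le.trans hR⟩, min_le_left β (δ / M), by linarith⟩
  have hout : ∀ q ∈ (Ici 0 ×ˢ Ioi 0) \ K, M ≤ G q := fun q hq =>
    (le_div_iff₀ hq.1.2).2 (mul_le_sub_of_notMem_box hmono hM hβ.le (hβ.le.trans hR)
      (fun x y hx => hR₀ x y ((le_max_left R₀ β).trans hx)) hδR hεδ hq.1.1 hq.1.2 hq.2)
  obtain ⟨x, hx, hxmin⟩ := isCompact_Icc.prod isCompact_Icc |>.exists_isMinOn_of_le_outside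
    hKs hGcont h₀K hout
  refine ⟨(x.1, x.1 + β + x.2), ⟨hx.1, by linarith [mem_Ioi.1 hx.2]⟩, fun d₁ d₂ hd₁ hd => ?_⟩
  have hmin : G x ≤ G (d₁, d₂ - d₁ - β) := hxmin ⟨hd₁, by simp only [mem_Ioi]; linarith⟩
  calc costRatio H β x.1 (x.1 + β + x.2) = G x := costRatio_add_add H β x.1 x.2
    _ ≤ G (d₁, d₂ - d₁ - β) := hmin
    _ = costRatio H β d₁ (d₁ + β + (d₂ - d₁ - β)) := (costRatio_add_add H β d₁ _).symm
    _ = costRatio H β d₁ d₂ := by congr 1; ring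

end Existence

theorem costRatio_mul_sub (H : ℝ → ℝ) {β c₁ c₂ : ℝ} (h : c₁ + β < c₂) :
    costRatio H β c₁ c₂ * (c₂ - c₁ - β) = H c₂ - H c₁ :=
  div_mul_cancel₀ _ (by linarith)

namespace IsCostRatioMinimizer

variable {H H' : ℝ → ℝ} {β a : ℝ} {p q : ℝ × ℝ}

theorem costRatio_eq (hp : IsCostRatioMinimizer H β p) (hq : IsCostRatioMinimizer H β q) :
    costRatio H β p.1 p.2 = costRatio H β q.1 q.2 :=
  le_antisymm (hp.2 q.1 q.2 hq.1.1 hq.1.2) (hq.2 p.1 p.2 hp.1.1 hp.1.2)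

theorem mul_le_sub (hp : IsCostRatioMinimizer H β p) {d₁ d₂ : ℝ} (hd₁ : 0 ≤ d₁)
    (hd : d₁ + β < d₂) :
    costRatio H β p.1 p.2 * (d₂ - d₁ - β) ≤ H d₂ - H d₁ :=
  (le_div_iff₀ (by linarith)).1 (hp.2 d₁ d₂ hd₁ hd)

theorem sub_mul_snd_le (hp : IsCostRatioMinimizer H β p) {t : ℝ} (ht : p.1 + β < t) :
    H p.2 - costRatio H β p.1 p.2 * p.2 ≤ H t - costRatio H β p.1 p.2 * t := by
  linarith [hp.mul_le_sub hp.1.1 ht, costRatio_mul_sub H hp.1.2]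

theorem sub_mul_le_fst (hp : IsCostRatioMinimizer H β p) {s : ℝ} (hs : 0 ≤ s)
    (hsp : s + β < p.2) :
    H s - costRatio H β p.1 p.2 * s ≤ H p.1 - costRatio H β p.1 p.2 * p.1 := by
  linarith [hp.mul_le_sub hs hsp, costRatio_mul_sub H hp.1.2]

theorem deriv_snd_eq (hβ : 0 < β) (hHderiv : ∀ x ∈ Ioi (0 : ℝ), HasDerivAt H (H' x) x)
    (hp : IsCostRatioMinimizer H β p) : H' p.2 = costRatio H β p.1 p.2 := by
  have hmin : IsLocalMin (fun t => H t - costRatio H β p.1 p.2 * t) p.2 :=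
    eventually_of_mem (Ioi_mem_nhds hp.1.2) fun t ht => hp.sub_mul_snd_le ht
  exact sub_eq_zero.1 <| hmin.hasDerivAt_eq_zero <|
    (hHderiv p.2 (by simp only [mem_Ioi]; linarith [hp.1.1, hp.1.2])).sub_const_mul _

theorem deriv_fst_eq (hHderiv : ∀ x ∈ Ioi (0 : ℝ), HasDerivAt H (H' x) x)
    (hp : IsCostRatioMinimizer H β p) (hp₁ : 0 < p.1) : H' p.1 = costRatio H β p.1 p.2 := by
  have hmax : IsLocalMax (fun s => H s - costRatio H β p.1 p.2 * s) p.1 :=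
    eventually_of_mem (Ioo_mem_nhds hp₁ (by linarith [hp.1.2] : p.1 < p.2 - β)) fun s hs =>
      hp.sub_mul_le_fst hs.1.le (by linarith [hs.2])
  exact sub_eq_zero.1 <| hmax.hasDerivAt_eq_zero <| (hHderiv p.1 hp₁).sub_const_mul _

theorem deriv_fst_le (hHcont : ContinuousOn H (Ici 0))
    (hHderiv : ∀ x ∈ Ioi (0 : ℝ), HasDerivAt H (H' x) x) (hH'cont : ContinuousOn H' (Ici 0))
    (hp : IsCostRatioMinimizer H β p) : H' p.1 ≤ costRatio H β p.1 p.2 := by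
  by_contra! hlt
  have hev : ∀ᶠ x in 𝓝[≥] p.1, costRatio H β p.1 p.2 < H' x ∧ x < p.2 - β :=
    (((hH'cont p.1 hp.1.1).mono (Ici_subset_Ici.2 hp.1.1)).eventually (lt_mem_nhds hlt)).and
      (nhdsWithin_le_nhds (eventually_lt_nhds (by linarith [hp.1.2])))
  obtain ⟨u, hu, hsub⟩ := mem_nhdsGE_iff_exists_Ico_subset.1 hev
  obtain ⟨s, hps, hsu⟩ := exists_between (mem_Ioi.1 hu)
  have hrise := mul_sub_lt_sub_of_lt_deriv hHcont hHderiv hp.1.1 hps fun ξ hξ =>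
    (hsub ⟨hξ.1.le, hξ.2.trans hsu⟩).1
  have hdrop := hp.sub_mul_le_fst (hp.1.1.trans hps.le) (by linarith [(hsub ⟨hps.le, hsu⟩).2])
  linarith

theorem lt_snd (hβ : 0 < β) (hHcont : ContinuousOn H (Ici 0))
    (hHderiv : ∀ x ∈ Ioi (0 : ℝ), HasDerivAt H (H' x) x) (hdec : StrictAntiOn H' (Icc 0 a))
    (hp : IsCostRatioMinimizer H β p) : a < p.2 := by
  by_contra! hle
  obtain ⟨t, hpt, htp⟩ := exists_between hp.1.2
  have ht : 0 ≤ t := by linarith [hp.1.1]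
  have hrise := mul_sub_lt_sub_of_lt_deriv hHcont hHderiv ht htp fun ξ hξ =>
    hp.deriv_snd_eq hβ hHderiv ▸
      hdec ⟨ht.trans hξ.1.le, hξ.2.le.trans hle⟩ ⟨ht.trans htp.le, hle⟩ hξ.2
  linarith [hp.sub_mul_snd_le hpt]

theorem fst_le (hβ : 0 < β) (hHderiv : ∀ x ∈ Ioi (0 : ℝ), HasDerivAt H (H' x) x) (ha : 0 ≤ a)
    (hinc : StrictMonoOn H' (Ici a)) (hp : IsCostRatioMinimizer H β p) : p.1 ≤ a := by
  by_contra! hlt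
  have hp₁₂ : p.1 < p.2 := by linarith [hp.1.2]
  have := hinc hlt.le (hlt.le.trans hp₁₂.le) hp₁₂
  rw [hp.deriv_fst_eq hHderiv (ha.trans_lt hlt), hp.deriv_snd_eq hβ hHderiv] at this
  exact this.false

theorem fst_le_fst (hβ : 0 < β) (hHcont : ContinuousOn H (Ici 0))
    (hHderiv : ∀ x ∈ Ioi (0 : ℝ), HasDerivAt H (H' x) x) (hH'cont : ContinuousOn H' (Ici 0))
    (ha : 0 ≤ a) (hdec : StrictAntiOn H' (Icc 0 a)) (hinc : StrictMonoOn H' (Ici a))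
    (hp : IsCostRatioMinimizer H β p) (hq : IsCostRatioMinimizer H β q) : p.1 ≤ q.1 := by
  refine not_lt.1 fun hlt => ?_
  have := hdec ⟨hq.1.1, hq.fst_le hβ hHderiv ha hinc⟩ ⟨hp.1.1, hp.fst_le hβ hHderiv ha hinc⟩ hlt
  rw [hp.deriv_fst_eq hHderiv (hq.1.1.trans_lt hlt), hp.costRatio_eq hq] at this
  exact (hq.deriv_fst_le hHcont hHderiv hH'cont).not_gt this

theorem unique (hβ : 0 < β) (hHcont : ContinuousOn H (Ici 0))
    (hHderiv : ∀ x ∈ Ioi (0 : ℝ), HasDerivAt H (H' x) x) (hH'cont : ContinuousOn H' (Ici 0))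
    (ha : 0 ≤ a) (hdec : StrictAntiOn H' (Icc 0 a)) (hinc : StrictMonoOn H' (Ici a))
    (hp : IsCostRatioMinimizer H β p) (hq : IsCostRatioMinimizer H β q) : p = q :=
  Prod.ext
    (le_antisymm (hp.fst_le_fst hβ hHcont hHderiv hH'cont ha hdec hinc hq)
      (hq.fst_le_fst hβ hHcont hHderiv hH'cont ha hdec hinc hp))
    (hinc.injOn (hp.lt_snd hβ hHcont hHderiv hdec).le (hq.lt_snd hβ hHcont hHderiv hdec).le
      (by rw [hp.deriv_snd_eq hβ hHderiv, hq.deriv_snd_eq hβ hHderiv, hp.costRatio_eq hq]))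

end IsCostRatioMinimizer

theorem stmt_5
    (H H' : ℝ → ℝ)
    (hHcont : ContinuousOn H (Set.Ici 0))
    (hHderiv : ∀ x ∈ Set.Ioi (0:ℝ), HasDerivAt H (H' x) x)
    (hH'pos : ∀ x ∈ Set.Ioi (0:ℝ), 0 < H' x)
    (hH'cont : ContinuousOn H' (Set.Ici 0))
    (hH'top : Filter.Tendsto H' Filter.atTop Filter.atTop)
    (β : ℝ) (hβ : 0 < β)
    (astar : ℝ) (hastar : 0 ≤ astar)
    (hH'dec : StrictAntiOn H' (Set.Ioo 0 astar))
    (hH'inc : StrictMonoOn H' (Set.Ioi astar))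
    :
    ∃! p : ℝ × ℝ, (0 ≤ p.1 ∧ p.1 + β < p.2) ∧
      ∀ d₁ d₂ : ℝ, 0 ≤ d₁ → d₁ + β < d₂ →
        (H p.2 - H p.1) / (p.2 - p.1 - β) ≤ (H d₂ - H d₁) / (d₂ - d₁ - β) := by
  have hdec : StrictAntiOn H' (Icc 0 astar) :=
    hH'dec.Icc_of_Ioo (hH'cont.mono Icc_subset_Ici_self)
  have hinc : StrictMonoOn H' (Ici astar) :=
    hH'inc.Ici_of_Ioi (hH'cont.mono (Ici_subset_Ici.2 hastar))
  obtain ⟨p, hp⟩ := exists_isCostRatioMinimizer hβ hHcont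
    (strictMonoOn_Ici_of_deriv_pos hHcont hHderiv hH'pos)
    (exists_mul_sub_le_sub_of_tendsto_atTop hHcont hHderiv hH'top)
  exact ⟨p, hp, fun q hq =>
    IsCostRatioMinimizer.unique hβ hHcont hHderiv hH'cont hastar hdec hinc hq hp⟩
end

section
/- For every a ∈ (0,a*), the map ζ has a finite right derivative at a, given by ζ'₊(a) = H''₊(a)/H''₋(ζ(a)), where H''₊(a) denotes the right derivative of H' at a and H''₋(ζ(a)) denotes the left derivative of H' at ζ(a) (both of which exist by convexity of H', with H''₊(a) < 0 and H''₋(ζ(a)) > 0); in particular ζ'₊(a) < 0. -/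
/-!
Since `H' ∘ ζ = H'` on `(0, a*)`, the difference quotient of `ζ` at `a` is a ratio of difference
quotients of `H'`: `slope ζ a y = slope H' a y / slope H' (ζ a) (ζ y)`. As `y ↓ a` the numerator
tends to the right derivative `H''₊(a)`, and since `ζ` is decreasing and continuous, `ζ y ↑ ζ a`,
so the denominator tends to the left derivative `H''₋(ζ a)`. Convexity of `H'` provides both
one-sided derivatives and bounds them by secant slopes, whose signs are those given by the
monotonicity of `H'` on either side of `a*`.
-/

open Set Filter Topology

lemma slope_eq_slope_div_slope_of_comp_eq {f ζ : ℝ → ℝ} {a y : ℝ} (ha : f (ζ a) = f a)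
    (hy : f (ζ y) = f y) (hne : f y ≠ f a) :
    slope ζ a y = slope f a y / slope f (ζ a) (ζ y) := by
  have hya : y - a ≠ 0 := sub_ne_zero.2 fun h => hne (h ▸ rfl)
  have hζ : ζ y - ζ a ≠ 0 := sub_ne_zero.2 fun h => hne (by rw [← hy, h, ha])
  have hf : f y - f a ≠ 0 := sub_ne_zero.2 hne
  simp only [slope_def_field, ha, hy]
  field_simp

lemma HasDerivWithinAt.of_comp_eq {f ζ : ℝ → ℝ} {s t : Set ℝ} {a dp dm : ℝ}
    (hf : HasDerivWithinAt f dp s a) (hfζ : HasDerivWithinAt f dm t (ζ a)) (hdm : dm ≠ 0)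
    (hζ : Tendsto ζ (𝓝[s \ {a}] a) (𝓝[t \ {ζ a}] (ζ a))) (ha : f (ζ a) = f a)
    (hlevel : ∀ᶠ y in 𝓝[s \ {a}] a, f (ζ y) = f y ∧ f y ≠ f a) :
    HasDerivWithinAt ζ (dp / dm) s a := by
  rw [hasDerivWithinAt_iff_tendsto_slope] at hf hfζ ⊢
  refine (hf.div (hfζ.comp hζ) hdm).congr' ?_
  filter_upwards [hlevel] with y ⟨hy, hne⟩
  exact (slope_eq_slope_div_slope_of_comp_eq ha hy hne).symm

lemma StrictMonoOn.tendsto_of_tendsto_comp {α : Type*} {g : ℝ → ℝ} {s : Set ℝ} {b : ℝ}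
    (hg : StrictMonoOn g s) (hs : s ∈ 𝓝 b) {u : α → ℝ} {l : Filter α}
    (hus : ∀ᶠ y in l, u y ∈ s) (hgu : Tendsto (g ∘ u) l (𝓝 (g b))) :
    Tendsto u l (𝓝 b) := by
  have hb : b ∈ s := mem_of_mem_nhds hs
  refine tendsto_order.2 ⟨fun c hc => ?_, fun c hc => ?_⟩
  · obtain ⟨c', ⟨hcc', hc'b⟩, hsub⟩ := exists_Ioc_subset_of_mem_nhds' hs hc
    have hm : (c' + b) / 2 ∈ Ioc c' b := ⟨by linarith, by linarith⟩
    have hgm : g ((c' + b) / 2) < g b := hg (hsub hm) hb (by linarith)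
    filter_upwards [hus, hgu.eventually (lt_mem_nhds hgm)] with y hys hgy
    linarith [(hg.lt_iff_lt (hsub hm) hys).1 hgy]
  · obtain ⟨c', ⟨hbc', hc'c⟩, hsub⟩ := exists_Ico_subset_of_mem_nhds' hs hc
    have hm : (b + c') / 2 ∈ Ico b c' := ⟨by linarith, by linarith⟩
    have hgm : g b < g ((b + c') / 2) := hg hb (hsub hm) (by linarith)
    filter_upwards [hus, hgu.eventually (gt_mem_nhds hgm)] with y hys hgy
    linarith [(hg.lt_iff_lt hys (hsub hm)).1 hgy]

lemma StrictMonoOn.tendsto_nhdsLT_of_tendsto_comp {α : Type*} {g : ℝ → ℝ} {s : Set ℝ} {b : ℝ}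
    (hg : StrictMonoOn g s) (hs : s ∈ 𝓝 b) {u : α → ℝ} {l : Filter α}
    (hus : ∀ᶠ y in l, u y ∈ s ∧ g (u y) < g b) (hgu : Tendsto (g ∘ u) l (𝓝 (g b))) :
    Tendsto u l (𝓝[<] b) :=
  tendsto_nhdsWithin_iff.2 ⟨hg.tendsto_of_tendsto_comp hs (hus.mono fun _ h => h.1) hgu,
    hus.mono fun _ h => (hg.lt_iff_lt h.1 (mem_of_mem_nhds hs)).1 h.2⟩

lemma ConvexOn.neg_of_hasDerivWithinAt_Ioi {f : ℝ → ℝ} {S : Set ℝ} {x y d : ℝ}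
    (hf : ConvexOn ℝ S f) (hx : x ∈ S) (hy : y ∈ S) (hxy : x < y) (hfxy : f y < f x)
    (hd : HasDerivWithinAt f d (Ioi x) x) : d < 0 :=
  (hf.le_slope_of_hasDerivWithinAt_Ioi hx hy hxy hd).trans_lt
    ((slope_neg_iff_of_le hxy.le).2 hfxy)

lemma ConvexOn.pos_of_hasDerivWithinAt_Iio {f : ℝ → ℝ} {S : Set ℝ} {x y d : ℝ}
    (hf : ConvexOn ℝ S f) (hx : x ∈ S) (hy : y ∈ S) (hxy : x < y) (hfxy : f x < f y)
    (hd : HasDerivWithinAt f d (Iio y) y) : 0 < d :=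
  ((slope_pos_iff_of_le hxy.le).2 hfxy).trans_le
    (hf.slope_le_of_hasDerivWithinAt_Iio hx hy hxy hd)

theorem stmt_7_general
    (H' : ℝ → ℝ)
    (hH'cont : ContinuousOn H' (Set.Ici 0))
    (astar : ℝ)
    (hH'dec : StrictAntiOn H' (Set.Ioo 0 astar))
    (hH'inc : StrictMonoOn H' (Set.Ioi astar))
    (hH'conv : ConvexOn ℝ (Set.Ioi 0) H')
    (hastar0 : 0 < astar)
    (ζ : ℝ → ℝ)
    (hζ : ∀ x ∈ Set.Ioo 0 astar, ζ x ∈ Set.Ioi astar ∧ H' (ζ x) = H' x)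
    :
    ∀ a ∈ Set.Ioo 0 astar, ∃ dp dm : ℝ,
      HasDerivWithinAt H' dp (Set.Ici a) a ∧ dp < 0 ∧
      HasDerivWithinAt H' dm (Set.Iic (ζ a)) (ζ a) ∧ 0 < dm ∧
      HasDerivWithinAt ζ (dp / dm) (Set.Ici a) a ∧ dp / dm < 0 := by
  intro a ha
  obtain ⟨hζa, hH'ζa⟩ := hζ a ha
  obtain ⟨m, ham, hm⟩ := exists_between ha.2
  obtain ⟨m', hm', hm'ζ⟩ := exists_between (mem_Ioi.1 hζa)
  have hdp := hH'conv.hasDerivWithinAt_rightDeriv_of_mem_interior (by simpa using ha.1)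
  have hdm := hH'conv.hasDerivWithinAt_leftDeriv_of_mem_interior
    (by simpa using hastar0.trans hζa)
  have hdp_neg := hH'conv.neg_of_hasDerivWithinAt_Ioi ha.1 (ha.1.trans ham) ham
    (hH'dec ha ⟨ha.1.trans ham, hm⟩ ham) hdp
  have hdm_pos := hH'conv.pos_of_hasDerivWithinAt_Iio (hastar0.trans hm') (hastar0.trans hζa)
    hm'ζ (hH'inc hm' hζa hm'ζ) hdm
  have hnear : ∀ᶠ y in 𝓝[>] a, ζ y ∈ Ioi astar ∧ H' (ζ y) = H' y ∧ H' y < H' a := by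
    filter_upwards [Ioo_mem_nhdsGT ha.2] with y hy
    have hy0 : y ∈ Ioo 0 astar := ⟨ha.1.trans hy.1, hy.2⟩
    exact ⟨(hζ y hy0).1, (hζ y hy0).2, hH'dec ha hy0 hy.1⟩
  have hζ_tendsto : Tendsto ζ (𝓝[>] a) (𝓝[<] (ζ a)) := by
    have hH'a : Tendsto H' (𝓝[>] a) (𝓝 (H' (ζ a))) :=
      hH'ζa ▸ (hH'cont.continuousAt (Ici_mem_nhds ha.1)).tendsto.mono_left nhdsWithin_le_nhds
    refine hH'inc.tendsto_nhdsLT_of_tendsto_comp (Ioi_mem_nhds hζa) ?_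
      (hH'a.congr' (hnear.mono fun y hy => hy.2.1.symm))
    filter_upwards [hnear] with y ⟨hζy, hH'ζy, hlt⟩
    exact ⟨hζy, by rwa [hH'ζy, hH'ζa]⟩
  refine ⟨_, _, hdp.Ici_of_Ioi, hdp_neg, hdm.Iic_of_Iio, hdm_pos, ?_,
    div_neg_of_neg_of_pos hdp_neg hdm_pos⟩
  refine hdp.Ici_of_Ioi.of_comp_eq hdm.Iic_of_Iio hdm_pos.ne' ?_ hH'ζa ?_
  · rwa [Ici_sdiff_left, Iic_sdiff_right]
  · rw [Ici_sdiff_left]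
    exact hnear.mono fun y hy => ⟨hy.2.1, hy.2.2.ne⟩

theorem stmt_7
    (H H' : ℝ → ℝ)
    (hHcont : ContinuousOn H (Set.Ici 0))
    (hHderiv : ∀ x ∈ Set.Ioi (0:ℝ), HasDerivAt H (H' x) x)
    (hH'pos : ∀ x ∈ Set.Ioi (0:ℝ), 0 < H' x)
    (hH'cont : ContinuousOn H' (Set.Ici 0))
    (hH'top : Filter.Tendsto H' Filter.atTop Filter.atTop)
    (astar : ℝ) (hastar : 0 ≤ astar)
    (hH'dec : StrictAntiOn H' (Set.Ioo 0 astar))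
    (hH'inc : StrictMonoOn H' (Set.Ioi astar))
    (hH'conv : ConvexOn ℝ (Set.Ioi 0) H')
    (hastar0 : 0 < astar)
    (ζ : ℝ → ℝ)
    (hζ : ∀ x ∈ Set.Ioo 0 astar, ζ x ∈ Set.Ioi astar ∧ H' (ζ x) = H' x)
    :
    ∀ a ∈ Set.Ioo 0 astar, ∃ dp dm : ℝ,
      HasDerivWithinAt H' dp (Set.Ici a) a ∧ dp < 0 ∧
      HasDerivWithinAt H' dm (Set.Iic (ζ a)) (ζ a) ∧ 0 < dm ∧
      HasDerivWithinAt ζ (dp / dm) (Set.Ici a) a ∧ dp / dm < 0 :=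
  stmt_7_general H' hH'cont astar hH'dec hH'inc hH'conv hastar0 ζ hζ
end

section
/- For every x ∈ (0,c₁max), the function g₁ has a right derivative at x, given by g₁'₊(x) = ((ζ'₊(x) − 1)/(ζ(x) − x − β)) · (H'(x) − g₁(x)), where ζ'₊(x) denotes the right derivative of ζ at x. Consequently, at any x ∈ (0,c₁max): g₁'₊(x) < 0 if and only if g₁(x) < H'(x); g₁'₊(x) > 0 if and only if g₁(x) > H'(x); and g₁'₊(x) = 0 if and only if g₁(x) = H'(x). -/
open Set Filter Topology

/-!
Since H' is convex it has one-sided derivatives: the right derivative at x is negative and the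
left derivative at ζ x is positive. As H' (ζ y) = H' y, the difference quotient of ζ at x is the
ratio of the difference quotients of H' at x and at ζ x, so ζ'₊(x) = H'₊(x) / H'₋(ζ x) < 0.
The quotient rule, with H'(ζ x) = H'(x), then gives the formula for g₁'₊(x), whose coefficient
(ζ'₊(x) - 1) / (ζ x - x - β) is negative because ζ x - x > β below c₁max.
-/

theorem mem_Ioo_and_not_of_lt_sInf_or {a b c x : ℝ} {P : ℝ → Prop}
    (h₁ : (∃ y ∈ Ioo b a, P y) → c = sInf {y | y ∈ Ioo b a ∧ P y})
    (h₂ : (¬ ∃ y ∈ Ioo b a, P y) → c = a) (hx : x ∈ Ioo b c) :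
    x ∈ Ioo b a ∧ ¬ P x := by
  by_cases h : ∃ y ∈ Ioo b a, P y
  · have hc_le : ∀ y ∈ Ioo b a, P y → c ≤ y := fun y hy hPy =>
      h₁ h ▸ csInf_le ⟨b, fun z hz => hz.1.1.le⟩ ⟨hy, hPy⟩
    obtain ⟨y, hy, hPy⟩ := h
    have hxa : x ∈ Ioo b a := ⟨hx.1, (hx.2.trans_le (hc_le y hy hPy)).trans hy.2⟩
    exact ⟨hxa, fun hPx => (hc_le x hxa hPx).not_gt hx.2⟩
  · rw [h₂ h] at hx
    exact ⟨hx, fun hPx => h ⟨x, hx, hPx⟩⟩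

theorem StrictAntiOn.of_comp_eq {α β : Type*} [LinearOrder α] [LinearOrder β]
    {f : α → β} {ζ : α → α} {s t : Set α} (hfs : StrictAntiOn f s) (hft : StrictMonoOn f t)
    (hζ : MapsTo ζ s t) (hfζ : EqOn (f ∘ ζ) f s) : StrictAntiOn ζ s := by
  intro y hy z hz hyz
  exact (hft.lt_iff_lt (hζ hz) (hζ hy)).1
    ((hfζ hz).trans_lt ((hfs hy hz hyz).trans_eq (hfζ hy).symm))

theorem StrictMonoOn.tendsto_nhdsLT_of_tendsto_comp_s8 {ι α β : Type*}
    [LinearOrder α] [TopologicalSpace α] [OrderTopology α]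
    [LinearOrder β] [TopologicalSpace β] [OrderTopology β]
    {f : α → β} {u : ι → α} {l : Filter ι} {a c : α}
    (hf : StrictMonoOn f (Ioi a)) (hac : a < c) (hu : ∀ᶠ i in l, u i ∈ Ioo a c)
    (hfu : Tendsto (f ∘ u) l (𝓝 (f c))) : Tendsto u l (𝓝[<] c) := by
  refine tendsto_nhdsWithin_iff.2 ⟨tendsto_order.2 ⟨fun b hb => ?_, fun b hb => ?_⟩,
    hu.mono fun i hi => hi.2⟩
  · rcases le_or_gt b a with hba | hab
    · exact hu.mono fun i hi => hba.trans_lt hi.1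
    · filter_upwards [hu, hfu.eventually (lt_mem_nhds (hf hab hac hb))] with i hi hfi
      exact (hf.lt_iff_lt hab hi.1).1 hfi
  · exact hu.mono fun i hi => hi.2.trans hb

theorem ConvexOn.rightDeriv_neg_of_lt {S : Set ℝ} {f : ℝ → ℝ} {x y : ℝ}
    (hfc : ConvexOn ℝ S f) (hx : x ∈ interior S) (hy : y ∈ S) (hxy : x < y) (hfxy : f y < f x) :
    derivWithin f (Ioi x) x < 0 := by
  refine (hfc.rightDeriv_le_slope_of_mem_interior hx hy hxy).trans_lt ?_
  rw [slope_def_field]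
  exact div_neg_of_neg_of_pos (sub_neg.2 hfxy) (sub_pos.2 hxy)

theorem ConvexOn.leftDeriv_pos_of_lt {S : Set ℝ} {f : ℝ → ℝ} {x y : ℝ}
    (hfc : ConvexOn ℝ S f) (hx : x ∈ S) (hy : y ∈ interior S) (hxy : x < y) (hfxy : f x < f y) :
    0 < derivWithin f (Iio y) y := by
  refine lt_of_lt_of_le ?_ (hfc.slope_le_leftDeriv_of_mem_interior hx hy hxy)
  rw [slope_def_field]
  exact div_pos (sub_pos.2 hfxy) (sub_pos.2 hxy)

-- `slope ζ x y = slope f x y / slope f (ζ x) (ζ y)` for `y > x`, because `f ∘ ζ = f` there.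
theorem hasDerivWithinAt_Ici_of_comp_eq {f ζ : ℝ → ℝ} {x p q : ℝ}
    (hfx : HasDerivWithinAt f p (Ioi x) x) (hfζx : HasDerivWithinAt f q (Iio (ζ x)) (ζ x))
    (hq : q ≠ 0) (hζ : Tendsto ζ (𝓝[>] x) (𝓝[<] (ζ x)))
    (hfζ : ∀ᶠ y in 𝓝[>] x, f (ζ y) = f y) (hfζ_self : f (ζ x) = f x) :
    HasDerivWithinAt ζ (p / q) (Ici x) x := by
  rw [hasDerivWithinAt_iff_tendsto_slope, Ici_sdiff_left]
  have hslope_ζ : Tendsto (fun y => slope f (ζ x) (ζ y)) (𝓝[>] x) (𝓝 q) :=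
    ((hasDerivWithinAt_iff_tendsto_slope' self_notMem_Iio).1 hfζx).comp hζ
  refine (((hasDerivWithinAt_iff_tendsto_slope' self_notMem_Ioi).1 hfx).div hslope_ζ
    hq).congr' ?_
  filter_upwards [tendsto_nhdsWithin_iff.1 hζ |>.2, hslope_ζ.eventually_ne hq, hfζ,
    self_mem_nhdsWithin] with y (hζy : ζ y < ζ x) hslope hfy (hxy : x < y)
  rw [slope_def_field, hfy, hfζ_self] at hslope
  simp only [Pi.div_apply, slope_def_field, hfy, hfζ_self]
  have : f y - f x ≠ 0 := fun h => hslope (by rw [h, zero_div])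
  field_simp [sub_ne_zero.2 hζy.ne, sub_ne_zero.2 hxy.ne']

section LevelPartner

variable {f ζ : ℝ → ℝ} {a b x : ℝ}

theorem tendsto_nhdsLT_of_level_partner (hdec : StrictAntiOn f (Ioo b a))
    (hinc : StrictMonoOn f (Ioi a)) (hζ : ∀ y ∈ Ioo b a, ζ y ∈ Ioi a ∧ f (ζ y) = f y)
    (hx : x ∈ Ioo b a) (hfx : ContinuousWithinAt f (Ioi x) x) :
    Tendsto ζ (𝓝[>] x) (𝓝[<] (ζ x)) := by
  have hζ_anti : StrictAntiOn ζ (Ioo b a) :=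
    hdec.of_comp_eq hinc (fun y hy => (hζ y hy).1) (fun y hy => (hζ y hy).2)
  have hmem : ∀ᶠ y in 𝓝[>] x, y ∈ Ioo b a :=
    mem_of_superset (Ioo_mem_nhdsGT hx.2) fun y hy => ⟨hx.1.trans hy.1, hy.2⟩
  refine hinc.tendsto_nhdsLT_of_tendsto_comp_s8 (hζ x hx).1 ?_ ?_
  · filter_upwards [hmem, self_mem_nhdsWithin] with y hy (hxy : x < y)
    exact ⟨(hζ y hy).1, hζ_anti hx hy hxy⟩
  · rw [(hζ x hx).2]
    exact hfx.tendsto.congr' (hmem.mono fun y hy => (hζ y hy).2.symm)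

theorem exists_hasDerivWithinAt_Ici_neg_of_level_partner (hdec : StrictAntiOn f (Ioo b a))
    (hinc : StrictMonoOn f (Ioi a)) (hconv : ConvexOn ℝ (Ioi b) f)
    (hζ : ∀ y ∈ Ioo b a, ζ y ∈ Ioi a ∧ f (ζ y) = f y) (hx : x ∈ Ioo b a) :
    ∃ d < 0, HasDerivWithinAt ζ d (Ici x) x := by
  obtain ⟨hζx, hfζx⟩ := hζ x hx
  have hx_int : x ∈ interior (Ioi b) := by simpa using hx.1
  have hζx_int : ζ x ∈ interior (Ioi b) := by simpa using hx.1.trans (hx.2.trans hζx)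
  obtain ⟨y, hxy, hya⟩ := exists_between hx.2
  obtain ⟨z, haz, hzζ⟩ := exists_between (mem_Ioi.1 hζx)
  have hf_right := hconv.hasDerivWithinAt_rightDeriv_of_mem_interior hx_int
  have hf_right_neg : derivWithin f (Ioi x) x < 0 :=
    hconv.rightDeriv_neg_of_lt hx_int (hx.1.trans hxy) hxy (hdec hx ⟨hx.1.trans hxy, hya⟩ hxy)
  have hf_left_pos : 0 < derivWithin f (Iio (ζ x)) (ζ x) :=
    hconv.leftDeriv_pos_of_lt (hx.1.trans (hx.2.trans haz)) hζx_int hzζ (hinc haz hζx hzζ)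
  refine ⟨_, div_neg_of_neg_of_pos hf_right_neg hf_left_pos,
    hasDerivWithinAt_Ici_of_comp_eq hf_right
      (hconv.hasDerivWithinAt_leftDeriv_of_mem_interior hζx_int) hf_left_pos.ne'
      (tendsto_nhdsLT_of_level_partner hdec hinc hζ hx hf_right.continuousWithinAt) ?_ hfζx⟩
  filter_upwards [Ioo_mem_nhdsGT hx.2] with y hy using (hζ y ⟨hx.1.trans hy.1, hy.2⟩).2

end LevelPartner

theorem hasDerivWithinAt_secant_div {F u : ℝ → ℝ} {s : Set ℝ} {x m u' β : ℝ}
    (hFx : HasDerivAt F m x) (hFu : HasDerivAt F m (u x)) (hu : HasDerivWithinAt u u' s x)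
    (hD : u x - x - β ≠ 0) :
    HasDerivWithinAt (fun y => (F (u y) - F y) / (u y - y - β))
      ((u' - 1) / (u x - x - β) * (m - (F (u x) - F x) / (u x - x - β))) s x := by
  have hN : HasDerivWithinAt (fun y => F (u y) - F y) (m * u' - m) s x :=
    (hFu.comp_hasDerivWithinAt x hu).sub hFx.hasDerivWithinAt
  have hD' : HasDerivWithinAt (fun y => u y - y - β) (u' - 1) s x :=
    (hu.sub (hasDerivWithinAt_id x s)).sub_const β
  refine (hN.div hD' hD).congr_deriv ?_
  field_simp

theorem mul_sub_sign_of_neg {c a b : ℝ} (hc : c < 0) :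
    (c * (a - b) < 0 ↔ b < a) ∧ (0 < c * (a - b) ↔ a < b) ∧ (c * (a - b) = 0 ↔ b = a) := by
  refine ⟨?_, ?_, ?_⟩
  · rw [← mul_zero c, mul_lt_mul_left_of_neg hc, sub_pos]
  · rw [← mul_zero c, mul_lt_mul_left_of_neg hc, sub_neg]
  · rw [mul_eq_zero, or_iff_right hc.ne, sub_eq_zero, eq_comm]

theorem stmt_8_general
    (H H' : ℝ → ℝ)
    (hHderiv : ∀ x ∈ Set.Ioi (0:ℝ), HasDerivAt H (H' x) x)
    (β : ℝ)
    (astar : ℝ)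
    (hH'dec : StrictAntiOn H' (Set.Ioo 0 astar))
    (hH'inc : StrictMonoOn H' (Set.Ioi astar))
    (hH'conv : ConvexOn ℝ (Set.Ioi 0) H')
    (ζ : ℝ → ℝ)
    (hζ : ∀ x ∈ Set.Ioo 0 astar, ζ x ∈ Set.Ioi astar ∧ H' (ζ x) = H' x)
    (c1max : ℝ)
    (hc1max₁ : (∃ x ∈ Set.Ioo 0 astar, ζ x - x ≤ β) →
      c1max = sInf {x | x ∈ Set.Ioo 0 astar ∧ ζ x - x ≤ β})
    (hc1max₂ : (¬ ∃ x ∈ Set.Ioo 0 astar, ζ x - x ≤ β) → c1max = astar)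
    (g₁ : ℝ → ℝ) (hg₁ : ∀ x, g₁ x = (H (ζ x) - H x) / (ζ x - x - β))
    :
    ∀ x ∈ Set.Ioo 0 c1max, ∃ zd : ℝ,
      HasDerivWithinAt ζ zd (Set.Ici x) x ∧
      HasDerivWithinAt g₁ ((zd - 1) / (ζ x - x - β) * (H' x - g₁ x)) (Set.Ici x) x ∧
      ((zd - 1) / (ζ x - x - β) * (H' x - g₁ x) < 0 ↔ g₁ x < H' x) ∧
      (0 < (zd - 1) / (ζ x - x - β) * (H' x - g₁ x) ↔ H' x < g₁ x) ∧
      ((zd - 1) / (ζ x - x - β) * (H' x - g₁ x) = 0 ↔ g₁ x = H' x) := by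
  intro x hx
  obtain ⟨hxI, hgap⟩ := mem_Ioo_and_not_of_lt_sInf_or hc1max₁ hc1max₂ hx
  obtain ⟨hζx, hH'ζx⟩ := hζ x hxI
  obtain ⟨zd, hzd, hζ'⟩ :=
    exists_hasDerivWithinAt_Ici_neg_of_level_partner hH'dec hH'inc hH'conv hζ hxI
  have hD : 0 < ζ x - x - β := by linarith [not_le.1 hgap]
  have hHζx : HasDerivAt H (H' x) (ζ x) := hH'ζx ▸ hHderiv (ζ x) (hxI.1.trans (hxI.2.trans hζx))
  have hg : HasDerivWithinAt g₁ ((zd - 1) / (ζ x - x - β) * (H' x - g₁ x)) (Ici x) x := by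
    rw [hg₁ x]
    exact (hasDerivWithinAt_secant_div (hHderiv x hxI.1) hHζx hζ' hD.ne').congr
      (fun y _ => hg₁ y) (hg₁ x)
  exact ⟨zd, hζ', hg, mul_sub_sign_of_neg (div_neg_of_neg_of_pos (by linarith) hD)⟩

theorem stmt_8
    (H H' : ℝ → ℝ)
    (hHcont : ContinuousOn H (Set.Ici 0))
    (hHderiv : ∀ x ∈ Set.Ioi (0:ℝ), HasDerivAt H (H' x) x)
    (hH'pos : ∀ x ∈ Set.Ioi (0:ℝ), 0 < H' x)
    (hH'cont : ContinuousOn H' (Set.Ici 0))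
    (hH'top : Filter.Tendsto H' Filter.atTop Filter.atTop)
    (β : ℝ) (hβ : 0 < β)
    (astar : ℝ) (hastar : 0 ≤ astar)
    (hH'dec : StrictAntiOn H' (Set.Ioo 0 astar))
    (hH'inc : StrictMonoOn H' (Set.Ioi astar))
    (hH'conv : ConvexOn ℝ (Set.Ioi 0) H')
    (hastar0 : 0 < astar)
    (ζ : ℝ → ℝ)
    (hζ : ∀ x ∈ Set.Ioo 0 astar, ζ x ∈ Set.Ioi astar ∧ H' (ζ x) = H' x)
    (c1max : ℝ)
    (hc1max₁ : (∃ x ∈ Set.Ioo 0 astar, ζ x - x ≤ β) →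
      c1max = sInf {x | x ∈ Set.Ioo 0 astar ∧ ζ x - x ≤ β})
    (hc1max₂ : (¬ ∃ x ∈ Set.Ioo 0 astar, ζ x - x ≤ β) → c1max = astar)
    (g₁ : ℝ → ℝ) (hg₁ : ∀ x, g₁ x = (H (ζ x) - H x) / (ζ x - x - β))
    :
    ∀ x ∈ Set.Ioo 0 c1max, ∃ zd : ℝ,
      HasDerivWithinAt ζ zd (Set.Ici x) x ∧
      HasDerivWithinAt g₁ ((zd - 1) / (ζ x - x - β) * (H' x - g₁ x)) (Set.Ici x) x ∧
      ((zd - 1) / (ζ x - x - β) * (H' x - g₁ x) < 0 ↔ g₁ x < H' x) ∧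
      (0 < (zd - 1) / (ζ x - x - β) * (H' x - g₁ x) ↔ H' x < g₁ x) ∧
      ((zd - 1) / (ζ x - x - β) * (H' x - g₁ x) = 0 ↔ g₁ x = H' x) :=
  stmt_8_general H H' hHderiv β astar hH'dec hH'inc hH'conv ζ hζ c1max hc1max₁ hc1max₂ g₁ hg₁
end

section
/- There exists X > 0 such that g₀(x) < H'(x) for all x ≥ X. -/
theorem stmt_9
    (H H' : ℝ → ℝ)
    (hHcont : ContinuousOn H (Set.Ici 0))
    (hHderiv : ∀ x ∈ Set.Ioi (0:ℝ), HasDerivAt H (H' x) x)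
    (hH'pos : ∀ x ∈ Set.Ioi (0:ℝ), 0 < H' x)
    (hH'cont : ContinuousOn H' (Set.Ici 0))
    (hH'top : Filter.Tendsto H' Filter.atTop Filter.atTop)
    (β : ℝ) (hβ : 0 < β)
    (hH'conv : ConvexOn ℝ (Set.Ioi 0) H')
    (g₀ : ℝ → ℝ) (hg₀ : ∀ x, g₀ x = (H x - H 0) / (x - β))
    :
    ∃ X : ℝ, 0 < X ∧ ∀ x : ℝ, X ≤ x → g₀ x < H' x := by
  -- pick q > β with H' q ≥ H' β + 1
  obtain ⟨N, hN⟩ := Filter.eventually_atTop.mp (hH'top.eventually_ge_atTop (H' β + 1))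
  set q : ℝ := max N (β + 1) with hq
  have hqβ : β + 1 ≤ q := le_max_right _ _
  have hβq : β < q := by linarith
  have hq0 : (0:ℝ) < q := by linarith
  have hH'q : H' β + 1 ≤ H' q := hN q (le_max_left _ _)
  set C : ℝ := H q - H 0 with hC
  obtain ⟨M, hM⟩ := Filter.eventually_atTop.mp (hH'top.eventually_ge_atTop (C / (q - β) + 1))
  refine ⟨max (q + 1) M, lt_of_lt_of_le (by linarith) (le_max_left _ _), fun x hx => ?_⟩
  have hqx : q < x := by have := le_trans (le_max_left (q+1) M) hx; linarith
  have hMx : C / (q - β) + 1 ≤ H' x := hM x (le_trans (le_max_right _ _) hx)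
  have hβx : β < x := hβq.trans hqx
  have hx0 : (0:ℝ) < x := hβ.trans hβx
  -- MVT on [q, x]
  obtain ⟨c, hc, hcslope⟩ := exists_hasDerivAt_eq_slope H H' hqx
    (hHcont.mono (fun y hy => le_trans hq0.le hy.1))
    (fun y hy => hHderiv y (hq0.trans hy.1))
  have hqc : q < c := hc.1
  have hcx : c < x := hc.2
  -- H' c ≤ H' x via convexity slopes
  have s1 : (H' q - H' β) / (q - β) ≤ (H' c - H' q) / (c - q) :=
    hH'conv.slope_mono_adjacent hβ (hq0.trans hqc) hβq hqc
  have s2 : (H' c - H' q) / (c - q) ≤ (H' x - H' c) / (x - c) :=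
    hH'conv.slope_mono_adjacent hq0 (hq0.trans (hqc.trans hcx)) hqc hcx
  have hs0 : (0:ℝ) < (H' q - H' β) / (q - β) := by
    apply div_pos <;> linarith
  have hcxle : H' c ≤ H' x := by
    have h3 : (0:ℝ) < (H' x - H' c) / (x - c) := lt_of_lt_of_le hs0 (s1.trans s2)
    have h4 := mul_pos h3 (show (0:ℝ) < x - c by linarith)
    rw [div_mul_cancel₀ _ (show x - c ≠ 0 by linarith)] at h4
    linarith
  -- combine
  have hHx : H x - H q = H' c * (x - q) := by
    rw [hcslope, div_mul_cancel₀ _ (show x - q ≠ 0 by linarith)]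
  have hH'xC : C < H' x * (q - β) := by
    have h1 : C / (q - β) * (q - β) = C := div_mul_cancel₀ _ (show q - β ≠ 0 by linarith)
    nlinarith
  have hkey : H x - H 0 < H' x * (x - β) := by
    have h2 : H' c * (x - q) ≤ H' x * (x - q) := by nlinarith
    nlinarith
  rw [hg₀, div_lt_iff₀ (by linarith : (0:ℝ) < x - β)]
  exact hkey
end

section
/- There exists a unique point ĉ ∈ (max(β, a*), ∞) such that g₀(ĉ) = H'(ĉ); moreover g₀ is strictly decreasing on (β, ĉ) and strictly increasing on (ĉ, ∞), so that ĉ is the unique minimizer of g₀ on (β,∞), and g₀(x) > H'(x) for x ∈ (β, ĉ) while g₀(x) < H'(x) for x ∈ (ĉ, ∞). -/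
set_option maxHeartbeats 1600000 in
theorem stmt_10
    (H H' : ℝ → ℝ)
    (hHcont : ContinuousOn H (Set.Ici 0))
    (hHderiv : ∀ x ∈ Set.Ioi (0:ℝ), HasDerivAt H (H' x) x)
    (hH'pos : ∀ x ∈ Set.Ioi (0:ℝ), 0 < H' x)
    (hH'cont : ContinuousOn H' (Set.Ici 0))
    (hH'top : Filter.Tendsto H' Filter.atTop Filter.atTop)
    (β : ℝ) (hβ : 0 < β)
    (astar : ℝ) (hastar : 0 ≤ astar)
    (hH'dec : StrictAntiOn H' (Set.Ioo 0 astar))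
    (hH'inc : StrictMonoOn H' (Set.Ioi astar))
    (hH'conv : ConvexOn ℝ (Set.Ioi 0) H')
    (g₀ : ℝ → ℝ) (hg₀ : ∀ x, g₀ x = (H x - H 0) / (x - β))
    :
    ∃ chat : ℝ, max β astar < chat ∧ g₀ chat = H' chat ∧
      (∀ z : ℝ, max β astar < z → g₀ z = H' z → z = chat) ∧
      StrictAntiOn g₀ (Set.Ioo β chat) ∧ StrictMonoOn g₀ (Set.Ioi chat) ∧
      (∀ x : ℝ, β < x → x ≠ chat → g₀ chat < g₀ x) ∧
      (∀ x ∈ Set.Ioo β chat, H' x < g₀ x) ∧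
      (∀ x ∈ Set.Ioi chat, g₀ x < H' x) := by
  set b : ℝ := max β astar with hbdef
  have hbβ : β ≤ b := le_max_left _ _
  have hba : astar ≤ b := le_max_right _ _
  have hb0 : 0 < b := lt_of_lt_of_le hβ hbβ
  -- MVT helper
  have hmvt : ∀ a c : ℝ, 0 ≤ a → a < c → ∃ ξ ∈ Set.Ioo a c, H c - H a = H' ξ * (c - a) := by
    intro a c ha hac
    obtain ⟨ξ, hξ, heq⟩ := exists_hasDerivAt_eq_slope H H' hac
      (hHcont.mono (fun t ht => le_trans ha ht.1))
      (fun x hx => hHderiv x (lt_of_le_of_lt ha hx.1))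
    refine ⟨ξ, hξ, ?_⟩
    rw [heq, div_mul_cancel₀ _ (sub_ne_zero.mpr (ne_of_gt hac))]
  -- boundary monotonicity: H' astar ≤ H' y for y > astar
  have hH'leR : ∀ x y : ℝ, astar ≤ x → x < y → H' x ≤ H' y := by
    intro x y hx hxy
    rcases eq_or_lt_of_le hx with rfl | h
    · have hne : astar ≠ y := ne_of_lt hxy
      have hclo : astar ∈ closure (Set.Ioo astar y) := by
        rw [closure_Ioo hne]; exact ⟨le_refl _, hxy.le⟩
      haveI hNB : (nhdsWithin astar (Set.Ioo astar y)).NeBot :=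
        mem_closure_iff_nhdsWithin_neBot.mp hclo
      have hcw : ContinuousWithinAt H' (Set.Ioo astar y) astar :=
        (hH'cont.continuousWithinAt hastar).mono (fun t ht => le_trans hastar ht.1.le)
      have hev : ∀ᶠ t in nhdsWithin astar (Set.Ioo astar y), H' t ≤ H' y :=
        Filter.eventually_of_mem self_mem_nhdsWithin (fun t ht => (hH'inc ht.1 hxy ht.2).le)
      exact le_of_tendsto hcw hev
    · exact (hH'inc h (lt_trans h hxy) hxy).le
  -- boundary antitonicity: H' astar ≤ H' t for 0 < t < astar
  have hH'leL : ∀ t : ℝ, 0 < t → t < astar → H' astar ≤ H' t := by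
    intro t ht0 hta
    have hne : t ≠ astar := ne_of_lt hta
    have hclo : astar ∈ closure (Set.Ioo t astar) := by
      rw [closure_Ioo hne]; exact ⟨hta.le, le_refl _⟩
    haveI hNB : (nhdsWithin astar (Set.Ioo t astar)).NeBot :=
      mem_closure_iff_nhdsWithin_neBot.mp hclo
    have hcw : ContinuousWithinAt H' (Set.Ioo t astar) astar :=
      (hH'cont.continuousWithinAt hastar).mono (fun s hs => (lt_trans ht0 hs.1).le)
    have hev : ∀ᶠ s in nhdsWithin astar (Set.Ioo t astar), H' s ≤ H' t :=
      Filter.eventually_of_mem self_mem_nhdsWithin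
        (fun s hs => (hH'dec ⟨ht0, hta⟩ ⟨lt_trans ht0 hs.1, hs.2⟩ hs.1).le)
    exact le_of_tendsto hcw hev
  -- H is strictly monotone on [0, ∞)
  have hHmono : StrictMonoOn H (Set.Ici 0) := by
    apply strictMonoOn_of_deriv_pos (convex_Ici 0) hHcont
    intro x hx
    rw [interior_Ici] at hx
    rw [(hHderiv x hx).deriv]
    exact hH'pos x hx
  obtain ⟨D, hD⟩ : ∃ D : ℝ → ℝ, D = fun x => H x - H 0 - H' x * (x - β) := ⟨_, rfl⟩
  -- D is strictly decreasing on [b, ∞)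
  have hDanti : StrictAntiOn D (Set.Ici b) := by
    intro x hx y hy hxy
    have hx' : b ≤ x := hx
    obtain ⟨ξ, hξ, heq⟩ := hmvt x y (le_of_lt (lt_of_lt_of_le hb0 hx')) hxy
    have hξa : astar < ξ := lt_of_le_of_lt (le_trans hba hx') hξ.1
    have h1 : H' ξ < H' y := hH'inc hξa (lt_trans hξa hξ.2) hξ.2
    have h2 : H' x ≤ H' y := hH'leR x y (le_trans hba hx') hxy
    have h3 : β ≤ x := le_trans hbβ hx'
    simp only [hD]
    nlinarith [mul_pos (sub_pos.mpr h1) (sub_pos.mpr hxy),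
      mul_nonneg (sub_nonneg.mpr h2) (sub_nonneg.mpr h3)]
  -- D is positive on (β, b]
  have hDposle : ∀ x : ℝ, β < x → x ≤ b → 0 < D x := by
    intro x hβx hxb
    have hx0 : 0 < x := lt_trans hβ hβx
    obtain ⟨ξ, hξ, heq⟩ := hmvt 0 x le_rfl hx0
    have hxa : x ≤ astar := by
      rcases le_max_iff.mp (hbdef ▸ hxb) with h | h
      · exact absurd hβx (not_lt.mpr h)
      · exact h
    have hle : H' x ≤ H' ξ := by
      rcases eq_or_lt_of_le hxa with h | h
      · rw [h]; exact hH'leL ξ hξ.1 (h ▸ hξ.2)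
      · exact (hH'dec ⟨hξ.1, lt_trans hξ.2 h⟩ ⟨hx0, h⟩ hξ.2).le
    have hpos := hH'pos x hx0
    simp only [hD]
    nlinarith [mul_nonneg (sub_nonneg.mpr hle) hx0.le, mul_pos hpos hβ]
  -- D b > 0
  have hDb : 0 < D b := by
    rcases eq_or_lt_of_le hbβ with he | hlt
    · have hH0β : H 0 < H β := hHmono (le_refl (0:ℝ)) (le_of_lt hβ) hβ
      simp only [hD, ← he, sub_self, mul_zero, sub_zero]
      linarith
    · exact hDposle b hlt le_rfl
  -- D is eventually negative
  have hDneg : ∃ x, b < x ∧ D x < 0 := by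
    have ha'0 : 0 < b + 1 := by linarith
    have ha'a : astar < b + 1 := lt_of_le_of_lt hba (lt_add_one b)
    have hA : 0 < H' (b + 1) := hH'pos _ ha'0
    obtain ⟨N, hN⟩ := Filter.eventually_atTop.mp (hH'top.eventually_ge_atTop (4 * H' (b + 1)))
    set A := H' (b + 1) with hAdef
    set C := H (b + 1) - H 0 with hCdef
    set x := max (max N (b + 2)) (max (4 * β)
      ((4*C + 16*A*β + 13*A*(b+1) + 1)/(3*A))) with hxdef
    have hxN : N ≤ x := le_trans (le_max_left _ _) (le_max_left _ _)
    have hxa' : b + 2 ≤ x := le_trans (le_max_right _ _) (le_max_left _ _)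
    have hx4β : 4 * β ≤ x := le_trans (le_max_left _ _) (le_max_right _ _)
    have hxq : (4*C + 16*A*β + 13*A*(b+1) + 1)/(3*A) ≤ x :=
      le_trans (le_max_right _ _) (le_max_right _ _)
    have hx6 : 4*C + 16*A*β + 13*A*(b+1) + 1 ≤ 3*A*x := by
      rw [div_le_iff₀ (by positivity : (0:ℝ) < 3*A)] at hxq
      linarith
    have hi4 : 4 * A ≤ H' x := hN x hxN
    have ha'x : b + 1 < x := by linarith
    have hx0 : 0 < x := lt_trans ha'0 ha'x
    have ha'm : b + 1 < (b + 1 + x)/2 := by linarith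
    have hmx : (b + 1 + x)/2 < x := by linarith
    obtain ⟨ξ₁, hξ₁, he1⟩ := hmvt (b+1) ((b + 1 + x)/2) ha'0.le ha'm
    obtain ⟨ξ₂, hξ₂, he2⟩ := hmvt ((b + 1 + x)/2) x (by linarith) hmx
    have hi1 : H' ξ₁ < H' ((b + 1 + x)/2) :=
      hH'inc (lt_trans ha'a hξ₁.1) (lt_trans ha'a ha'm) hξ₁.2
    have hi2 : H' ξ₂ < H' x :=
      hH'inc (lt_trans (lt_trans ha'a ha'm) hξ₂.1) (lt_trans ha'a ha'x) hξ₂.2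
    have hcx := hH'conv.2 (Set.mem_Ioi.mpr ha'0) (Set.mem_Ioi.mpr hx0)
      (by norm_num : (0:ℝ) ≤ 1/2) (by norm_num : (0:ℝ) ≤ 1/2) (by norm_num : (1/2:ℝ) + 1/2 = 1)
    simp only [smul_eq_mul] at hcx
    have hmeq : (1/2:ℝ) * (b+1) + (1/2) * x = (b + 1 + x)/2 := by ring
    rw [hmeq] at hcx
    have hi3 : H' ((b + 1 + x)/2) ≤ (A + H' x)/2 := by
      rw [hAdef]; linarith
    refine ⟨x, by linarith, ?_⟩
    have s1 : H' ξ₁ * ((b + 1 + x)/2 - (b+1)) ≤ (A + H' x)/2 * ((b + 1 + x)/2 - (b+1)) :=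
      mul_le_mul_of_nonneg_right (le_trans hi1.le hi3) (by linarith)
    have s2 : H' ξ₂ * (x - (b + 1 + x)/2) ≤ H' x * (x - (b + 1 + x)/2) :=
      mul_le_mul_of_nonneg_right hi2.le (by linarith)
    have hcoef : β - x/4 - 3*(b+1)/4 ≤ 0 := by linarith
    have s3 : H' x * (β - x/4 - 3*(b+1)/4) ≤ 4*A*(β - x/4 - 3*(b+1)/4) :=
      mul_le_mul_of_nonpos_right hi4 hcoef
    simp only [hD]
    nlinarith [he1, he2, s1, s2, s3, hx6]
  -- IVT
  obtain ⟨x₁, hbx₁, hDx₁⟩ := hDneg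
  have hsub : Set.Icc b x₁ ⊆ Set.Ici (0:ℝ) := fun t ht => le_trans hb0.le ht.1
  have hDcont : ContinuousOn D (Set.Icc b x₁) := by
    rw [hD]
    exact ((hHcont.mono hsub).sub continuousOn_const).sub
      ((hH'cont.mono hsub).mul (continuousOn_id.sub continuousOn_const))
  obtain ⟨chat, hcmem, hDchat⟩ :=
    intermediate_value_Ioo' (le_of_lt hbx₁) hDcont (⟨hDx₁, hDb⟩ : (0:ℝ) ∈ Set.Ioo (D x₁) (D b))
  have hbc : b < chat := hcmem.1
  have hβc : β < chat := lt_of_le_of_lt hbβ hbc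
  have hDpos : ∀ x : ℝ, β < x → x < chat → 0 < D x := by
    intro x hβx hxc
    rcases le_or_gt x b with h | h
    · exact hDposle x hβx h
    · have := hDanti (le_of_lt h) (le_of_lt hbc) hxc
      rw [hDchat] at this
      exact this
  have hDneg' : ∀ x : ℝ, chat < x → D x < 0 := by
    intro x hx
    have := hDanti (le_of_lt hbc) (le_trans hbc.le hx.le) hx
    rw [hDchat] at this
    exact this
  -- g₀ derivative
  have hgfun : g₀ = fun x => (H x - H 0) / (x - β) := funext hg₀
  have hg' : ∀ x : ℝ, β < x →
      HasDerivAt g₀ ((H' x * (x - β) - (H x - H 0) * 1) / (x - β)^2) x := by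
    intro x hx
    have hx0 : 0 < x := lt_trans hβ hx
    have hne : x - β ≠ 0 := sub_ne_zero.mpr (ne_of_gt hx)
    have h1 : HasDerivAt (fun y => H y - H 0) (H' x) x := (hHderiv x hx0).sub_const _
    have h2 : HasDerivAt (fun y : ℝ => y - β) 1 x := (hasDerivAt_id x).sub_const β
    rw [hgfun]
    exact h1.div h2 hne
  have hganti : StrictAntiOn g₀ (Set.Ioc β chat) := by
    apply strictAntiOn_of_deriv_neg (convex_Ioc β chat)
    · intro x hx
      exact (hg' x hx.1).continuousAt.continuousWithinAt
    · intro x hx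
      rw [interior_Ioc] at hx
      rw [(hg' x hx.1).deriv]
      apply div_neg_of_neg_of_pos
      · have hpos := hDpos x hx.1 hx.2
        simp only [hD] at hpos
        linarith
      · exact pow_pos (sub_pos.mpr hx.1) 2
  have hgmono : StrictMonoOn g₀ (Set.Ici chat) := by
    apply strictMonoOn_of_deriv_pos (convex_Ici chat)
    · intro x hx
      exact (hg' x (lt_of_lt_of_le hβc hx)).continuousAt.continuousWithinAt
    · intro x hx
      rw [interior_Ici] at hx
      rw [(hg' x (lt_trans hβc hx)).deriv]
      apply div_pos
      · have hneg := hDneg' x hx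
        simp only [hD] at hneg
        linarith
      · exact pow_pos (sub_pos.mpr (lt_trans hβc hx)) 2
  have hcne : chat - β ≠ 0 := sub_ne_zero.mpr (ne_of_gt hβc)
  have hval : g₀ chat = H' chat := by
    rw [hg₀]
    have hkey : H chat - H 0 = H' chat * (chat - β) := by
      simp only [hD] at hDchat
      linarith
    rw [hkey, mul_div_assoc, div_self hcne, mul_one]
  have huniq : ∀ z : ℝ, b < z → g₀ z = H' z → z = chat := by
    intro z hz hgz
    have hzβ : β < z := lt_of_le_of_lt hbβ hz
    rw [hg₀, div_eq_iff (sub_ne_zero.mpr (ne_of_gt hzβ))] at hgz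
    have hDz : D z = 0 := by
      simp only [hD]
      linarith
    exact hDanti.injOn hz.le hbc.le (hDz.trans hDchat.symm)
  have hmin : ∀ x : ℝ, β < x → x ≠ chat → g₀ chat < g₀ x := by
    intro x hx hne
    rcases lt_or_gt_of_ne hne with h | h
    · exact hganti ⟨hx, h.le⟩ ⟨hβc, le_rfl⟩ h
    · exact hgmono (le_refl chat) h.le h
  refine ⟨chat, hbc, hval, huniq, hganti.mono Set.Ioo_subset_Ioc_self,
    hgmono.mono Set.Ioi_subset_Ici_self, hmin, ?_, ?_⟩
  · intro x hx
    have hpos := hDpos x hx.1 hx.2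
    rw [hg₀, lt_div_iff₀ (sub_pos.mpr hx.1)]
    simp only [hD] at hpos
    linarith
  · intro x hx
    have hneg := hDneg' x hx
    rw [hg₀, div_lt_iff₀ (sub_pos.mpr (lt_trans hβc hx))]
    simp only [hD] at hneg
    linarith
end

section
/- Assume a* > 0 and 0 < β < β_max. Then c₁max > 0, and there exists a unique point c̄ ∈ (0, c₁max) such that g₁(c̄) = H'(c̄); moreover g₁ is strictly decreasing on (0, c̄) and strictly increasing on (c̄, c₁max), so c̄ is the unique minimizer of g₁ on (0, c₁max), and g₁(c̄) = H'(c̄) < H'(0). -/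
open Set Filter

lemma chord_lower (H H' : ℝ → ℝ) (hH'cont : ContinuousOn H' (Set.Ici 0))
    (hderiv : ∀ x ∈ Set.Ioi (0:ℝ), HasDerivAt H (H' x) x) {u v c : ℝ} (hu : 0 < u)
    (huv : u < v) (hlt : ∀ t ∈ Set.Ioo u v, c < H' t) : c * (v - u) < H v - H u := by
  have hsub : Set.uIcc u v ⊆ Set.Ici 0 := by
    rw [Set.uIcc_of_le huv.le]
    exact fun t ht => le_trans hu.le ht.1
  have hint : IntervalIntegrable H' MeasureTheory.volume u v :=
    (hH'cont.mono hsub).intervalIntegrable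
  have hftc : ∫ t in u..v, H' t = H v - H u := by
    refine intervalIntegral.integral_eq_sub_of_hasDerivAt (fun t ht => hderiv t ?_) hint
    rw [Set.uIcc_of_le huv.le] at ht
    exact lt_of_lt_of_le hu ht.1
  have hpos : 0 < ∫ t in u..v, (H' t - c) := by
    refine intervalIntegral.intervalIntegral_pos_of_pos_on
      (hint.sub intervalIntegrable_const) (fun t ht => sub_pos.2 (hlt t ht)) huv
  rw [intervalIntegral.integral_sub hint intervalIntegrable_const,
    intervalIntegral.integral_const, hftc] at hpos
  simp only [smul_eq_mul] at hpos
  nlinarith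

lemma chord_upper (H H' : ℝ → ℝ) (hH'cont : ContinuousOn H' (Set.Ici 0))
    (hderiv : ∀ x ∈ Set.Ioi (0:ℝ), HasDerivAt H (H' x) x) {u v c : ℝ} (hu : 0 < u)
    (huv : u < v) (hgt : ∀ t ∈ Set.Ioo u v, H' t < c) : H v - H u < c * (v - u) := by
  have hsub : Set.uIcc u v ⊆ Set.Ici 0 := by
    rw [Set.uIcc_of_le huv.le]
    exact fun t ht => le_trans hu.le ht.1
  have hint : IntervalIntegrable H' MeasureTheory.volume u v :=
    (hH'cont.mono hsub).intervalIntegrable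
  have hftc : ∫ t in u..v, H' t = H v - H u := by
    refine intervalIntegral.integral_eq_sub_of_hasDerivAt (fun t ht => hderiv t ?_) hint
    rw [Set.uIcc_of_le huv.le] at ht
    exact lt_of_lt_of_le hu ht.1
  have hpos : 0 < ∫ t in u..v, (c - H' t) := by
    refine intervalIntegral.intervalIntegral_pos_of_pos_on
      (intervalIntegrable_const.sub hint) (fun t ht => sub_pos.2 (hgt t ht)) huv
  rw [intervalIntegral.integral_sub intervalIntegrable_const hint,
    intervalIntegral.integral_const, hftc] at hpos
  simp only [smul_eq_mul] at hpos
  nlinarith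

set_option maxHeartbeats 2000000 in
theorem stmt_11
    (H H' : ℝ → ℝ)
    (hHcont : ContinuousOn H (Set.Ici 0))
    (hHderiv : ∀ x ∈ Set.Ioi (0:ℝ), HasDerivAt H (H' x) x)
    (hH'pos : ∀ x ∈ Set.Ioi (0:ℝ), 0 < H' x)
    (hH'cont : ContinuousOn H' (Set.Ici 0))
    (hH'top : Filter.Tendsto H' Filter.atTop Filter.atTop)
    (β : ℝ) (hβ : 0 < β)
    (astar : ℝ) (hastar : 0 ≤ astar)
    (hH'dec : StrictAntiOn H' (Set.Ioo 0 astar))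
    (hH'inc : StrictMonoOn H' (Set.Ioi astar))
    (hH'conv : ConvexOn ℝ (Set.Ioi 0) H')
    (hastar0 : 0 < astar)
    (ζ : ℝ → ℝ)
    (hζ : ∀ x ∈ Set.Ioo 0 astar, ζ x ∈ Set.Ioi astar ∧ H' (ζ x) = H' x)
    (c1max : ℝ)
    (hc1max₁ : (∃ x ∈ Set.Ioo 0 astar, ζ x - x ≤ β) →
      c1max = sInf {x | x ∈ Set.Ioo 0 astar ∧ ζ x - x ≤ β})
    (hc1max₂ : (¬ ∃ x ∈ Set.Ioo 0 astar, ζ x - x ≤ β) → c1max = astar)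
    (g₁ : ℝ → ℝ) (hg₁ : ∀ x, g₁ x = (H (ζ x) - H x) / (ζ x - x - β))
    (z₀ βmax : ℝ) (hz₀ : z₀ ∈ Set.Ioi astar ∧ H' z₀ = H' 0)
    (hβmax : βmax = z₀ - (H z₀ - H 0) / H' 0)
    (hβlt : β < βmax)
    :
    0 < c1max ∧ ∃ cbar : ℝ, cbar ∈ Set.Ioo 0 c1max ∧ g₁ cbar = H' cbar ∧
      (∀ z ∈ Set.Ioo 0 c1max, g₁ z = H' z → z = cbar) ∧
      StrictAntiOn g₁ (Set.Ioo 0 cbar) ∧ StrictMonoOn g₁ (Set.Ioo cbar c1max) ∧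
      (∀ x ∈ Set.Ioo 0 c1max, x ≠ cbar → g₁ cbar < g₁ x) ∧
      g₁ cbar = H' cbar ∧ H' cbar < H' 0 := by
  have hz₀astar : astar < z₀ := hz₀.1
  have hz₀pos : 0 < z₀ := hastar0.trans hz₀astar
  have hH0pos : 0 < H' 0 := hz₀.2 ▸ hH'pos z₀ hz₀pos
  -- H strictly increasing on [0,∞)
  have hHmono : StrictMonoOn H (Set.Ici 0) := by
    apply strictMonoOn_of_deriv_pos (convex_Ici 0) hHcont
    intro x hx
    rw [interior_Ici] at hx
    rw [(hHderiv x hx).deriv]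
    exact hH'pos x hx
  -- H' 0 dominates on (0, astar)
  have htend0 : Filter.Tendsto H' (nhdsWithin 0 (Set.Ioi 0)) (nhds (H' 0)) :=
    (hH'cont 0 Set.self_mem_Ici).mono_left (nhdsWithin_mono _ Set.Ioi_subset_Ici_self)
  have hH'lt0 : ∀ t ∈ Set.Ioo (0:ℝ) astar, H' t < H' 0 := by
    intro t ht
    have hs : t/2 ∈ Set.Ioo (0:ℝ) astar := ⟨by linarith [ht.1], by linarith [ht.2, ht.1]⟩
    have h1 : H' t < H' (t/2) := hH'dec hs ht (by linarith [ht.1])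
    have h2 : H' (t/2) ≤ H' 0 := by
      refine ge_of_tendsto htend0 ?_
      filter_upwards [Ioo_mem_nhdsGT_of_mem (Set.mem_Ico.mpr ⟨le_refl (0:ℝ), hs.1⟩)] with u hu
      exact (hH'dec ⟨hu.1, hu.2.trans hs.2⟩ hs hu.2).le
    linarith
  have hH'astar_le : ∀ s, astar < s → H' astar ≤ H' s := by
    intro s hs
    have hm : astar < (astar + s)/2 := by linarith
    have hm2 : (astar + s)/2 < s := by linarith
    have htendA : Filter.Tendsto H' (nhdsWithin astar (Set.Ioi astar)) (nhds (H' astar)) :=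
      ((hH'cont.continuousAt (Ici_mem_nhds hastar0)).tendsto).mono_left nhdsWithin_le_nhds
    have h1 : H' astar ≤ H' ((astar + s)/2) := by
      refine le_of_tendsto htendA ?_
      filter_upwards [Ioo_mem_nhdsGT_of_mem (Set.mem_Ico.mpr ⟨le_refl astar, hm⟩)] with u hu
      exact (hH'inc hu.1 hm hu.2).le
    have h2 : H' ((astar + s)/2) < H' s := hH'inc hm hs hm2
    linarith
  -- basic ζ facts
  have hζmem : ∀ x ∈ Set.Ioo 0 astar, astar < ζ x := fun x hx => (hζ x hx).1
  have hζeq : ∀ x ∈ Set.Ioo 0 astar, H' (ζ x) = H' x := fun x hx => (hζ x hx).2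
  have hζanti : ∀ x ∈ Set.Ioo 0 astar, ∀ y ∈ Set.Ioo 0 astar, x < y → ζ y < ζ x := by
    intro x hx y hy hxy
    by_contra h
    push_neg at h
    have h2 : H' (ζ x) ≤ H' (ζ y) :=
      hH'inc.monotoneOn (hζmem x hx) (hζmem y hy) h
    rw [hζeq x hx, hζeq y hy] at h2
    exact absurd h2 (not_le.2 (hH'dec hx hy hxy))
  have hζlt_z₀ : ∀ x ∈ Set.Ioo 0 astar, ζ x < z₀ := by
    intro x hx
    by_contra h
    push_neg at h
    have h2 : H' z₀ ≤ H' (ζ x) := hH'inc.monotoneOn hz₀astar (hζmem x hx) h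
    rw [hζeq x hx, hz₀.2] at h2
    exact absurd h2 (not_le.2 (hH'lt0 x hx))
  have hζgt : ∀ x ∈ Set.Ioo 0 astar, x < ζ x := fun x hx => hx.2.trans (hζmem x hx)
  -- continuity of ζ
  have hζcont : ∀ x ∈ Set.Ioo 0 astar, ContinuousAt ζ x := by
    intro x hx
    rw [Metric.continuousAt_iff]
    intro ε hε
    have hζx : astar < ζ x := hζmem x hx
    set ε' := min ε ((ζ x - astar)/2) with hε'def
    have hε'pos : 0 < ε' := lt_min hε (by linarith)
    have hε'le : ε' ≤ (ζ x - astar)/2 := min_le_right _ _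
    have ha : astar < ζ x - ε' := by linarith
    have hHa : H' (ζ x - ε') < H' x := by
      rw [← hζeq x hx]
      exact hH'inc ha hζx (by linarith)
    have hHb : H' x < H' (ζ x + ε') := by
      rw [← hζeq x hx]
      exact hH'inc hζx (by simp only [Set.mem_Ioi]; linarith) (by linarith)
    have hH'x : ContinuousAt H' x := hH'cont.continuousAt (Ici_mem_nhds hx.1)
    obtain ⟨δ₁, hδ₁pos, hδ₁⟩ := Metric.continuousAt_iff.1 hH'x
      (min (H' x - H' (ζ x - ε')) (H' (ζ x + ε') - H' x)) (lt_min (by linarith) (by linarith))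
    refine ⟨min δ₁ (min x (astar - x)), lt_min hδ₁pos (lt_min hx.1 (by linarith [hx.2])), ?_⟩
    intro y hy
    have hy1 : dist y x < δ₁ := lt_of_lt_of_le hy (min_le_left _ _)
    have hyx : |y - x| < min x (astar - x) := by
      rw [Real.dist_eq] at hy
      exact lt_of_lt_of_le hy (min_le_right _ _)
    obtain ⟨hyx1, hyx2⟩ := lt_min_iff.1 hyx
    obtain ⟨hya, hyb⟩ := abs_lt.1 hyx1
    obtain ⟨hyc, hyd⟩ := abs_lt.1 hyx2
    have hyo : y ∈ Set.Ioo 0 astar := ⟨by linarith, by linarith⟩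
    have hH'y := hδ₁ hy1
    rw [Real.dist_eq] at hH'y
    obtain ⟨hH'y1, hH'y2⟩ := lt_min_iff.1 hH'y
    obtain ⟨hl1, hl2⟩ := abs_lt.1 hH'y1
    obtain ⟨hl3, hl4⟩ := abs_lt.1 hH'y2
    have hlow : H' (ζ x - ε') < H' y := by linarith
    have hhigh : H' y < H' (ζ x + ε') := by linarith
    have hζy1 : ζ x - ε' < ζ y := by
      by_contra h
      push_neg at h
      have h2 : H' (ζ y) ≤ H' (ζ x - ε') := hH'inc.monotoneOn (hζmem y hyo) ha h
      rw [hζeq y hyo] at h2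
      linarith
    have hζy2 : ζ y < ζ x + ε' := by
      by_contra h
      push_neg at h
      have h2 : H' (ζ x + ε') ≤ H' (ζ y) :=
        hH'inc.monotoneOn (by simp only [Set.mem_Ioi]; linarith) (hζmem y hyo) h
      rw [hζeq y hyo] at h2
      linarith
    rw [Real.dist_eq, abs_lt]
    have hε'ε : ε' ≤ ε := min_le_left _ _
    constructor <;> linarith
  -- S nonempty
  have hSne : ∃ x ∈ Set.Ioo 0 astar, ζ x - x ≤ β := by
    by_contra hno
    push_neg at hno
    have h1 : H' astar ≤ H' (astar + β/8) := hH'astar_le _ (by linarith)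
    have h2 : H' (astar + β/8) < H' (astar + β/4) :=
      hH'inc (by simp only [Set.mem_Ioi]; linarith) (by simp only [Set.mem_Ioi]; linarith)
        (by linarith)
    have htendL : Filter.Tendsto H' (nhdsWithin astar (Set.Iio astar)) (nhds (H' astar)) :=
      ((hH'cont.continuousAt (Ici_mem_nhds hastar0)).tendsto).mono_left nhdsWithin_le_nhds
    have hev : ∀ᶠ x in nhdsWithin astar (Set.Iio astar), H' x < H' (astar + β/4) :=
      htendL (Iio_mem_nhds (by linarith))
    have hmem : Set.Ioo (max 0 (astar - β/2)) astar ∈ nhdsWithin astar (Set.Iio astar) :=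
      Ioo_mem_nhdsLT_of_mem ⟨max_lt hastar0 (by linarith), le_refl _⟩
    obtain ⟨x, hx1, hx2⟩ := (hev.and (eventually_of_mem hmem (fun x hx => hx))).exists
    have hxIoo : x ∈ Set.Ioo 0 astar := ⟨lt_of_le_of_lt (le_max_left _ _) hx2.1, hx2.2⟩
    have hβx := hno x hxIoo
    have hxlb : astar - β/2 < x := lt_of_le_of_lt (le_max_right _ _) hx2.1
    have hζxm : astar + β/4 < ζ x := by linarith
    have h3 : H' (astar + β/4) < H' (ζ x) :=
      hH'inc (by simp only [Set.mem_Ioi]; linarith) (hζmem x hxIoo) hζxm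
    rw [hζeq x hxIoo] at h3
    linarith
  have hc1 : c1max = sInf {x | x ∈ Set.Ioo 0 astar ∧ ζ x - x ≤ β} := hc1max₁ hSne
  set S := {x | x ∈ Set.Ioo 0 astar ∧ ζ x - x ≤ β} with hSdef
  have hSbdd : BddBelow S := ⟨0, fun x hx => hx.1.1.le⟩
  obtain ⟨xs, hxs1, hxs2⟩ := hSne
  have hxsS : xs ∈ S := ⟨hxs1, hxs2⟩
  have hc1lt : c1max < astar := by
    rw [hc1]
    exact lt_of_le_of_lt (csInf_le hSbdd hxsS) hxs1.2
  -- β < z₀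
  have hHz₀ : H 0 < H z₀ := hHmono Set.self_mem_Ici hz₀pos.le hz₀pos
  have hβz₀ : β < z₀ := by
    have h1 : 0 < (H z₀ - H 0)/H' 0 := div_pos (by linarith) hH0pos
    rw [hβmax] at hβlt
    linarith
  -- c1max > 0
  set w := (max astar β + z₀)/2 with hwdef
  have hmaxw : max astar β < z₀ := max_lt hz₀astar hβz₀
  have hwa : astar < w := by
    have := le_max_left astar β
    simp only [hwdef]
    linarith
  have hwβ : β < w := by
    have := le_max_right astar β
    simp only [hwdef]
    linarith
  have hwz : w < z₀ := by
    simp only [hwdef]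
    linarith
  have hH'w : H' w < H' 0 := by
    rw [← hz₀.2]
    exact hH'inc hwa hz₀astar hwz
  have hevw : ∀ᶠ x in nhdsWithin 0 (Set.Ioi 0), H' w < H' x := htend0 (Ioi_mem_nhds hH'w)
  obtain ⟨ε₀, hε₀, hε₀sub⟩ := mem_nhdsGT_iff_exists_Ioo_subset.1 hevw
  have hεlb : ∀ x ∈ S, min ε₀ (min astar (w - β)) ≤ x := by
    intro x hxS
    by_contra h
    push_neg at h
    obtain ⟨h1, h23⟩ := lt_min_iff.1 h
    obtain ⟨h2, h3⟩ := lt_min_iff.1 h23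
    have hxIoo := hxS.1
    have hH'xw : H' w < H' x := hε₀sub ⟨hxIoo.1, h1⟩
    have hζw : w < ζ x := by
      by_contra hc
      push_neg at hc
      have h4 : H' (ζ x) ≤ H' w := hH'inc.monotoneOn (hζmem x hxIoo) hwa hc
      rw [hζeq x hxIoo] at h4
      linarith
    have : β < ζ x - x := by linarith
    linarith [hxS.2]
  have hc1pos : 0 < c1max := by
    rw [hc1]
    exact lt_of_lt_of_le (lt_min hε₀ (lt_min hastar0 (by linarith)))
      (le_csInf ⟨xs, hxsS⟩ hεlb)
  -- D > 0 strictly inside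
  have hD : ∀ x ∈ Set.Ioo 0 c1max, β < ζ x - x := by
    intro x hx
    by_contra h
    push_neg at h
    have hxIoo : x ∈ Set.Ioo 0 astar := ⟨hx.1, hx.2.trans hc1lt⟩
    have hxS : x ∈ S := ⟨hxIoo, h⟩
    have := csInf_le hSbdd hxS
    rw [← hc1] at this
    linarith [hx.2]
  have hc1Ioo : c1max ∈ Set.Ioo 0 astar := ⟨hc1pos, hc1lt⟩
  -- ζ c1max - c1max = β
  have hζc1cont : ContinuousAt (fun x => ζ x - x) c1max :=
    (hζcont c1max hc1Ioo).sub continuousAt_id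
  have hζc1 : ζ c1max - c1max = β := by
    have hle : ζ c1max - c1max ≤ β := by
      by_contra h
      push_neg at h
      have hev : ∀ᶠ x in nhds c1max, β < ζ x - x := hζc1cont (Ioi_mem_nhds h)
      obtain ⟨δ, hδpos, hδ⟩ := Metric.eventually_nhds_iff.1 hev
      have hall : ∀ s ∈ S, c1max + δ ≤ s := by
        intro s hs
        have hs1 : c1max ≤ s := hc1 ▸ csInf_le hSbdd hs
        by_contra hcs
        push_neg at hcs
        have hd : dist s c1max < δ := by
          rw [Real.dist_eq, abs_lt]
          constructor <;> linarith
        exact absurd (hδ hd) (not_lt.2 hs.2)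
      have := le_csInf ⟨xs, hxsS⟩ hall
      rw [← hc1] at this
      linarith
    have hge : β ≤ ζ c1max - c1max := by
      have htl : Filter.Tendsto (fun x => ζ x - x) (nhdsWithin c1max (Set.Iio c1max))
          (nhds (ζ c1max - c1max)) := hζc1cont.tendsto.mono_left nhdsWithin_le_nhds
      refine ge_of_tendsto htl ?_
      filter_upwards [Ioo_mem_nhdsLT_of_mem
        (Set.mem_Ioc.mpr ⟨hc1pos, le_refl c1max⟩)] with x hx
      exact (hD x hx).le
    linarith
  -- positivity of numerator
  have hNpos : ∀ x ∈ Set.Ioo 0 c1max, 0 < H (ζ x) - H x := by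
    intro x hx
    have hxIoo : x ∈ Set.Ioo 0 astar := ⟨hx.1, hx.2.trans hc1lt⟩
    have hζgtx := hζgt x hxIoo
    exact sub_pos.2 (hHmono hx.1.le (hx.1.trans hζgtx).le hζgtx)
  -- F
  set F : ℝ → ℝ := fun t => H (ζ t) - H t - H' t * (ζ t - t - β) with hFdef
  have hFt : ∀ t, F t = H (ζ t) - H t - H' t * (ζ t - t - β) := fun t => rfl
  -- key comparison lemmas
  have keyA : ∀ x ∈ Set.Ioo 0 c1max, ∀ y ∈ Set.Ioo 0 c1max, x < y → F y ≤ 0 →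
      (H (ζ y) - H y) / (ζ y - y - β) < (H (ζ x) - H x) / (ζ x - x - β) := by
    intro x hx y hy hxy hFy
    have hxI : x ∈ Set.Ioo 0 astar := ⟨hx.1, hx.2.trans hc1lt⟩
    have hyI : y ∈ Set.Ioo 0 astar := ⟨hy.1, hy.2.trans hc1lt⟩
    have hDx : 0 < ζ x - x - β := by linarith [hD x hx]
    have hDy : 0 < ζ y - y - β := by linarith [hD y hy]
    have hζxy : ζ y < ζ x := hζanti x hxI y hyI hxy
    have h1 : H' y * (y - x) < H y - H x := by
      refine chord_lower H H' hH'cont hHderiv hx.1 hxy (fun t ht => ?_)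
      exact hH'dec ⟨hx.1.trans ht.1, ht.2.trans hyI.2⟩ hyI ht.2
    have h2 : H' y * (ζ x - ζ y) < H (ζ x) - H (ζ y) := by
      refine chord_lower H H' hH'cont hHderiv (hastar0.trans (hζmem y hyI)) hζxy
        (fun t ht => ?_)
      rw [← hζeq y hyI]
      exact hH'inc (hζmem y hyI) ((hζmem y hyI).trans ht.1) ht.1
    rw [div_lt_div_iff₀ hDy hDx]
    have hFy' : H (ζ y) - H y ≤ H' y * (ζ y - y - β) := by
      have := hFy
      rw [hFt y] at this
      linarith
    set Nx := H (ζ x) - H x with hNx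
    set Ny := H (ζ y) - H y with hNy
    set Dx := ζ x - x - β with hDxd
    set Dy := ζ y - y - β with hDyd
    set p := H' y with hp
    have k1 : 0 < Dx - Dy := by simp only [hDxd, hDyd]; linarith
    have k2 : p * (Dx - Dy) < Nx - Ny := by
      have heq : p * (Dx - Dy) = p * (y - x) + p * (ζ x - ζ y) := by
        simp only [hDxd, hDyd]; ring
      rw [heq]
      simp only [hNx, hNy]
      linarith
    have m1 : Dy * (p * (Dx - Dy)) < Dy * (Nx - Ny) := mul_lt_mul_of_pos_left k2 hDy
    have m2 : Ny * (Dx - Dy) ≤ p * Dy * (Dx - Dy) := by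
      have := mul_le_mul_of_nonneg_right hFy' k1.le
      linarith [this]
    nlinarith [m1, m2, k1, hDx, hDy]
  have keyB : ∀ x ∈ Set.Ioo 0 c1max, ∀ y ∈ Set.Ioo 0 c1max, x < y → 0 ≤ F x →
      (H (ζ x) - H x) / (ζ x - x - β) < (H (ζ y) - H y) / (ζ y - y - β) := by
    intro x hx y hy hxy hFx
    have hxI : x ∈ Set.Ioo 0 astar := ⟨hx.1, hx.2.trans hc1lt⟩
    have hyI : y ∈ Set.Ioo 0 astar := ⟨hy.1, hy.2.trans hc1lt⟩
    have hDx : 0 < ζ x - x - β := by linarith [hD x hx]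
    have hDy : 0 < ζ y - y - β := by linarith [hD y hy]
    have hζxy : ζ y < ζ x := hζanti x hxI y hyI hxy
    have h1 : H y - H x < H' x * (y - x) := by
      refine chord_upper H H' hH'cont hHderiv hx.1 hxy (fun t ht => ?_)
      exact hH'dec hxI ⟨hx.1.trans ht.1, ht.2.trans hyI.2⟩ ht.1
    have h2 : H (ζ x) - H (ζ y) < H' x * (ζ x - ζ y) := by
      refine chord_upper H H' hH'cont hHderiv (hastar0.trans (hζmem y hyI)) hζxy
        (fun t ht => ?_)
      rw [← hζeq x hxI]
      exact hH'inc ((hζmem y hyI).trans ht.1) (hζmem x hxI) ht.2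
    rw [div_lt_div_iff₀ hDx hDy]
    have hFx' : H' x * (ζ x - x - β) ≤ H (ζ x) - H x := by
      have := hFx
      rw [hFt x] at this
      linarith
    set Nx := H (ζ x) - H x with hNx
    set Ny := H (ζ y) - H y with hNy
    set Dx := ζ x - x - β with hDxd
    set Dy := ζ y - y - β with hDyd
    set p := H' x with hp
    have k1 : 0 < Dx - Dy := by simp only [hDxd, hDyd]; linarith
    have k2 : Nx - Ny < p * (Dx - Dy) := by
      have heq : p * (Dx - Dy) = p * (y - x) + p * (ζ x - ζ y) := by
        simp only [hDxd, hDyd]; ring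
      rw [heq]
      simp only [hNx, hNy]
      linarith
    have m1 : Dx * (Nx - Ny) < Dx * (p * (Dx - Dy)) := mul_lt_mul_of_pos_left k2 hDx
    have m2 : p * Dx * (Dx - Dy) ≤ Nx * (Dx - Dy) := by
      have := mul_le_mul_of_nonneg_right hFx' k1.le
      linarith [this]
    nlinarith [m1, m2, k1, hDx, hDy]
  -- continuity of F
  have hFcont : ∀ x ∈ Set.Ioo 0 astar, ContinuousAt F x := by
    intro x hx
    have hζc := hζcont x hx
    have hHx : ContinuousAt H x := hHcont.continuousAt (Ici_mem_nhds hx.1)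
    have hH'x : ContinuousAt H' x := hH'cont.continuousAt (Ici_mem_nhds hx.1)
    have hHζ : ContinuousAt H (ζ x) :=
      hHcont.continuousAt (Ici_mem_nhds (hastar0.trans (hζmem x hx)))
    exact ((hHζ.comp hζc).sub hHx).sub
      (hH'x.mul ((hζc.sub continuousAt_id).sub continuousAt_const))
  -- ζ tends to z₀ at 0⁺
  have htendζ : Filter.Tendsto ζ (nhdsWithin 0 (Set.Ioi 0)) (nhds z₀) := by
    rw [Metric.tendsto_nhdsWithin_nhds]
    intro ε hε
    set w2 := (max astar (z₀ - ε) + z₀)/2 with hw2def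
    have hmax2 : max astar (z₀ - ε) < z₀ := max_lt hz₀astar (by linarith)
    have hw2a : astar < w2 := by
      have := le_max_left astar (z₀ - ε)
      simp only [hw2def]
      linarith
    have hw2ε : z₀ - ε < w2 := by
      have := le_max_right astar (z₀ - ε)
      simp only [hw2def]
      linarith
    have hw2z : w2 < z₀ := by
      simp only [hw2def]
      linarith
    have hH'w2 : H' w2 < H' 0 := by
      rw [← hz₀.2]
      exact hH'inc hw2a hz₀astar hw2z
    have hev2 : ∀ᶠ x in nhdsWithin 0 (Set.Ioi 0), H' w2 < H' x := htend0 (Ioi_mem_nhds hH'w2)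
    obtain ⟨u, hu, husub⟩ := mem_nhdsGT_iff_exists_Ioo_subset.1 hev2
    refine ⟨min u astar, lt_min hu hastar0, ?_⟩
    intro x hx hdist
    rw [Real.dist_eq] at hdist
    have hxpos : (0:ℝ) < x := hx
    have habs : |x - 0| = x := by rw [sub_zero, abs_of_pos hxpos]
    rw [habs] at hdist
    obtain ⟨hxu, hxa⟩ := lt_min_iff.1 hdist
    have hxIoo : x ∈ Set.Ioo 0 astar := ⟨hxpos, hxa⟩
    have hH'xw : H' w2 < H' x := husub ⟨hxpos, hxu⟩
    have hζxw : w2 < ζ x := by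
      by_contra h
      push_neg at h
      have h2 : H' (ζ x) ≤ H' w2 := hH'inc.monotoneOn (hζmem x hxIoo) hw2a h
      rw [hζeq x hxIoo] at h2
      linarith
    have hζxz : ζ x < z₀ := hζlt_z₀ x hxIoo
    rw [Real.dist_eq, abs_lt]
    constructor <;> linarith
  -- F tends to a negative limit at 0⁺
  have htendF : Filter.Tendsto F (nhdsWithin 0 (Set.Ioi 0))
      (nhds (H z₀ - H 0 - H' 0 * (z₀ - 0 - β))) := by
    have h1 : Filter.Tendsto (fun x => H (ζ x)) (nhdsWithin 0 (Set.Ioi 0)) (nhds (H z₀)) :=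
      ((hHcont.continuousAt (Ici_mem_nhds hz₀pos)).tendsto).comp htendζ
    have h2 : Filter.Tendsto H (nhdsWithin 0 (Set.Ioi 0)) (nhds (H 0)) :=
      (hHcont 0 Set.self_mem_Ici).mono_left (nhdsWithin_mono _ Set.Ioi_subset_Ici_self)
    have h4 : Filter.Tendsto (fun x : ℝ => x) (nhdsWithin 0 (Set.Ioi 0)) (nhds 0) :=
      tendsto_id.mono_left nhdsWithin_le_nhds
    exact ((h1.sub h2).sub (htend0.mul ((htendζ.sub h4).sub tendsto_const_nhds)))
  have hL0 : H z₀ - H 0 - H' 0 * (z₀ - 0 - β) < 0 := by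
    have h1 : (H z₀ - H 0)/H' 0 < z₀ - β := by
      rw [hβmax] at hβlt
      linarith
    have h2 := (div_lt_iff₀ hH0pos).1 h1
    nlinarith
  have hFneg : ∃ ε₁ > 0, ∀ x ∈ Set.Ioo 0 ε₁, F x < 0 := by
    have hev3 : ∀ᶠ x in nhdsWithin 0 (Set.Ioi 0), F x < 0 := htendF (Iio_mem_nhds hL0)
    obtain ⟨u, hu, husub⟩ := mem_nhdsGT_iff_exists_Ioo_subset.1 hev3
    exact ⟨u, hu, fun x hx => husub hx⟩
  -- F positive at c1max
  have hFc1pos : 0 < F c1max := by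
    rw [hFt c1max]
    have hζc1' : ζ c1max = c1max + β := by linarith
    rw [hζc1']
    have hlt := hHmono hc1pos.le (by linarith : (0:ℝ) ≤ c1max + β) (by linarith)
    ring_nf
    nlinarith
  have hFc1cont : ContinuousAt F c1max := hFcont c1max hc1Ioo
  have hFposnear : ∀ L, L < c1max → ∃ x, L < x ∧ x ∈ Set.Ioo 0 c1max ∧ 0 < F x := by
    intro L hL
    have hev0 : ∀ᶠ x in nhds c1max, 0 < F x := hFc1cont.tendsto (Ioi_mem_nhds hFc1pos)
    have hev : ∀ᶠ x in nhdsWithin c1max (Set.Iio c1max), 0 < F x :=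
      hev0.filter_mono nhdsWithin_le_nhds
    have hmem : Set.Ioo (max L 0) c1max ∈ nhdsWithin c1max (Set.Iio c1max) :=
      Ioo_mem_nhdsLT_of_mem ⟨max_lt hL hc1pos, le_refl _⟩
    obtain ⟨x, hx1, hx2⟩ := (hev.and (eventually_of_mem hmem (fun x hx => hx))).exists
    exact ⟨x, lt_of_le_of_lt (le_max_left _ _) hx2.1,
      ⟨lt_of_le_of_lt (le_max_right _ _) hx2.1, hx2.2⟩, hx1⟩
  -- existence of cbar
  obtain ⟨ε₁, hε₁, hε₁F⟩ := hFneg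
  obtain ⟨x₁, _, hx₁mem, hx₁F⟩ := hFposnear 0 hc1pos
  set x₀ := min (ε₁/2) (x₁/2) with hx₀def
  have hx₀pos : 0 < x₀ := lt_min (by linarith) (by linarith [hx₁mem.1])
  have hx₀ε : x₀ < ε₁ := lt_of_le_of_lt (min_le_left _ _) (by linarith)
  have hx₀x₁ : x₀ < x₁ := lt_of_le_of_lt (min_le_right _ _) (by linarith [hx₁mem.1])
  have hFx₀ : F x₀ < 0 := hε₁F x₀ ⟨hx₀pos, hx₀ε⟩
  have hx₀mem : x₀ ∈ Set.Ioo 0 c1max := ⟨hx₀pos, hx₀x₁.trans hx₁mem.2⟩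
  have hFcontIcc : ContinuousOn F (Set.Icc x₀ x₁) := fun t ht =>
    (hFcont t ⟨lt_of_lt_of_le hx₀pos ht.1,
      lt_of_le_of_lt ht.2 (hx₁mem.2.trans hc1lt)⟩).continuousWithinAt
  obtain ⟨cbar, hcbarIcc, hcbarF⟩ :=
    intermediate_value_Icc hx₀x₁.le hFcontIcc ⟨hFx₀.le, hx₁F.le⟩
  have hcbarmem : cbar ∈ Set.Ioo 0 c1max :=
    ⟨lt_of_lt_of_le hx₀pos hcbarIcc.1, lt_of_le_of_lt hcbarIcc.2 hx₁mem.2⟩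
  -- uniqueness of zeros of F
  have huniq : ∀ z ∈ Set.Ioo 0 c1max, F z = 0 → z = cbar := by
    intro z hz hzF
    by_contra hne
    rcases lt_or_gt_of_ne hne with h | h
    · have h1 := keyA z hz cbar hcbarmem h (le_of_eq hcbarF)
      have h2 := keyB z hz cbar hcbarmem h (ge_of_eq hzF)
      linarith
    · have h1 := keyA cbar hcbarmem z hz h (le_of_eq hzF)
      have h2 := keyB cbar hcbarmem z hz h (ge_of_eq hcbarF)
      linarith
  -- sign of F on each side
  have hFneg' : ∀ y ∈ Set.Ioo 0 cbar, F y < 0 := by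
    intro y hy
    have hymem : y ∈ Set.Ioo 0 c1max := ⟨hy.1, hy.2.trans hcbarmem.2⟩
    rcases lt_trichotomy (F y) 0 with h | h | h
    · exact h
    · exact absurd (huniq y hymem h) (ne_of_lt hy.2)
    · exfalso
      set x₂ := min (ε₁/2) (y/2) with hx₂def
      have hx₂pos : 0 < x₂ := lt_min (by linarith) (by linarith [hy.1])
      have hx₂y : x₂ < y := lt_of_le_of_lt (min_le_right _ _) (by linarith [hy.1])
      have hFx₂ : F x₂ < 0 :=
        hε₁F x₂ ⟨hx₂pos, lt_of_le_of_lt (min_le_left _ _) (by linarith)⟩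
      have hcont2 : ContinuousOn F (Set.Icc x₂ y) := fun t ht =>
        (hFcont t ⟨lt_of_lt_of_le hx₂pos ht.1,
          lt_of_le_of_lt ht.2 (hymem.2.trans hc1lt)⟩).continuousWithinAt
      obtain ⟨z, hzIcc, hzF⟩ := intermediate_value_Icc hx₂y.le hcont2 ⟨hFx₂.le, h.le⟩
      have hzmem : z ∈ Set.Ioo 0 c1max :=
        ⟨lt_of_lt_of_le hx₂pos hzIcc.1, lt_of_le_of_lt hzIcc.2 hymem.2⟩
      have heq := huniq z hzmem hzF
      rw [heq] at hzIcc
      linarith [hzIcc.2, hy.2]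
  have hFpos' : ∀ y ∈ Set.Ioo cbar c1max, 0 < F y := by
    intro y hy
    have hymem : y ∈ Set.Ioo 0 c1max := ⟨hcbarmem.1.trans hy.1, hy.2⟩
    rcases lt_trichotomy 0 (F y) with h | h | h
    · exact h
    · exact absurd (huniq y hymem h.symm) (ne_of_gt hy.1)
    · exfalso
      obtain ⟨x₃, hx₃y, hx₃mem, hx₃F⟩ := hFposnear y hy.2
      have hcont3 : ContinuousOn F (Set.Icc y x₃) := fun t ht =>
        (hFcont t ⟨lt_of_lt_of_le hymem.1 ht.1,
          lt_of_le_of_lt ht.2 (hx₃mem.2.trans hc1lt)⟩).continuousWithinAt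
      obtain ⟨z, hzIcc, hzF⟩ := intermediate_value_Icc hx₃y.le hcont3 ⟨h.le, hx₃F.le⟩
      have hzmem : z ∈ Set.Ioo 0 c1max :=
        ⟨lt_of_lt_of_le hymem.1 hzIcc.1, lt_of_le_of_lt hzIcc.2 hx₃mem.2⟩
      have heq := huniq z hzmem hzF
      rw [heq] at hzIcc
      linarith [hzIcc.1, hy.1]
  -- bridge between g₁ = H' and F = 0
  have hbridge : ∀ z ∈ Set.Ioo 0 c1max, (g₁ z = H' z ↔ F z = 0) := by
    intro z hz
    have hDz : 0 < ζ z - z - β := by linarith [hD z hz]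
    rw [hg₁ z, hFt z]
    constructor
    · intro h
      have := (div_eq_iff (ne_of_gt hDz)).1 h
      linarith
    · intro h
      rw [div_eq_iff (ne_of_gt hDz)]
      linarith
  have hgcbar : g₁ cbar = H' cbar := (hbridge cbar hcbarmem).2 hcbarF
  refine ⟨hc1pos, cbar, hcbarmem, hgcbar, ?_, ?_, ?_, ?_, hgcbar, ?_⟩
  · intro z hz hzg
    exact huniq z hz ((hbridge z hz).1 hzg)
  · intro x hx y hy hxy
    rw [hg₁ x, hg₁ y]
    have hymem : y ∈ Set.Ioo 0 c1max := ⟨hy.1, hy.2.trans hcbarmem.2⟩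
    have hxmem : x ∈ Set.Ioo 0 c1max := ⟨hx.1, hx.2.trans hcbarmem.2⟩
    exact keyA x hxmem y hymem hxy (hFneg' y hy).le
  · intro x hx y hy hxy
    rw [hg₁ x, hg₁ y]
    have hxmem : x ∈ Set.Ioo 0 c1max := ⟨hcbarmem.1.trans hx.1, hx.2⟩
    have hymem : y ∈ Set.Ioo 0 c1max := ⟨hcbarmem.1.trans hy.1, hy.2⟩
    exact keyB x hxmem y hymem hxy (hFpos' x hx).le
  · intro x hx hne
    rcases lt_or_gt_of_ne hne with h | h
    · rw [hg₁ x, hg₁ cbar]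
      exact keyA x hx cbar hcbarmem h (le_of_eq hcbarF)
    · rw [hg₁ x, hg₁ cbar]
      exact keyB cbar hcbarmem x hx h (ge_of_eq hcbarF)
  · exact hH'lt0 cbar ⟨hcbarmem.1, hcbarmem.2.trans hc1lt⟩
end

section
/- Assume a* > 0, c₁max > 0, and β ≥ β_max. Then g₁(x) > H'(x) for every x ∈ (0, c₁max), and consequently g₁ is strictly increasing on (0, c₁max). -/
open Set

/-! On `(0, a*)` the derivative `H'` stays below `H'(0)`, and on `(ζ x, z₀)` below `H'(z₀) = H'(0)`.
Comparing `H` on `[0, x]` and on `[ζ x, z₀]` with slope `H'(0)` gives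
`H(ζ x) - H(x) > H'(0) (ζ x - x - β_max)`, since `H'(0) β_max` is the amount by which the chord of
`H` over `[0, z₀]` falls short of slope `H'(0)`; hence `β ≥ β_max` yields `g₁(x) > H'(x)`.
For `x < y` the numerator of `g₁` drops by less than `H'(x)` times the drop of the denominator,
because `H' < H'(x)` on `(x, y)` and on `(ζ y, ζ x)`; together with `g₁(x) > H'(x)` this forces
`g₁(x) < g₁(y)`. -/

theorem sub_lt_mul_sub_of_hasDerivAt_lt {f f' : ℝ → ℝ} {l a b M : ℝ}
    (hf : ContinuousOn f (Ici l)) (hderiv : ∀ t ∈ Ioi l, HasDerivAt f (f' t) t)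
    (hla : l ≤ a) (hab : a < b) (hM : ∀ t ∈ Ioo a b, f' t < M) :
    f b - f a < M * (b - a) := by
  have hderiv' : ∀ t ∈ Ioo a b, HasDerivAt f (f' t) t := fun t ht => hderiv t (hla.trans_lt ht.1)
  refine (convex_Icc a b).image_sub_lt_mul_sub_of_deriv_lt
    (hf.mono (Icc_subset_Ici_self.trans (Ici_subset_Ici.2 hla))) ?_ ?_
    a (left_mem_Icc.2 hab.le) b (right_mem_Icc.2 hab.le) hab
  · rw [interior_Icc]
    exact fun t ht => (hderiv' t ht).differentiableAt.differentiableWithinAt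
  · rw [interior_Icc]
    exact fun t ht => (hderiv' t ht).deriv ▸ hM t ht

theorem StrictAntiOn.lt_of_continuousWithinAt_left {f : ℝ → ℝ} {a b s : ℝ}
    (hf : StrictAntiOn f (Ioo a b)) (hcont : ContinuousWithinAt f (Ioi a) a)
    (hs : s ∈ Ioo a b) : f s < f a := by
  have hm : (a + s) / 2 ∈ Ioo a b := ⟨by linarith [hs.1], by linarith [hs.1, hs.2]⟩
  have hma : f ((a + s) / 2) ≤ f a := by
    refine ge_of_tendsto hcont ?_
    filter_upwards [Ioo_mem_nhdsGT hm.1] with u hu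
    exact (hf ⟨hu.1, hu.2.trans hm.2⟩ hm hu.2).le
  exact (hf hm hs (by linarith [hs.1])).trans_le hma

theorem mem_Ioo_and_not_of_lt_of_eq_sInf {P : ℝ → Prop} {l a c x : ℝ}
    (hc₁ : (∃ y ∈ Ioo l a, P y) → c = sInf {y | y ∈ Ioo l a ∧ P y})
    (hc₂ : (¬ ∃ y ∈ Ioo l a, P y) → c = a) (hx : x ∈ Ioo l c) :
    x ∈ Ioo l a ∧ ¬ P x := by
  have hbdd : BddBelow {y | y ∈ Ioo l a ∧ P y} := ⟨l, fun y hy => hy.1.1.le⟩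
  by_cases hS : ∃ y ∈ Ioo l a, P y
  · obtain ⟨y, hy, hPy⟩ := hS
    rw [hc₁ ⟨y, hy, hPy⟩] at hx
    have hxa : x < a := (hx.2.trans_le (csInf_le hbdd ⟨hy, hPy⟩)).trans hy.2
    exact ⟨⟨hx.1, hxa⟩, fun hPx => (hx.2.trans_le (csInf_le hbdd ⟨⟨hx.1, hxa⟩, hPx⟩)).false⟩
  · rw [hc₂ hS] at hx
    exact ⟨hx, fun hPx => hS ⟨x, hx, hPx⟩⟩

theorem div_lt_div_of_mul_lt_of_sub_mul_le {n n' d d' p : ℝ} (hd' : 0 < d') (hdd' : d' < d)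
    (hn : p * d < n) (hn' : n - p * (d - d') ≤ n') : n / d < n' / d' := by
  have hd : 0 < d := hd'.trans hdd'
  rw [div_lt_div_iff₀ hd hd']
  nlinarith [mul_pos (sub_pos.2 hdd') (sub_pos.2 hn), mul_le_mul_of_nonneg_right hn' hd.le]

section

variable {H H' : ℝ → ℝ}

theorem mul_sub_sub_lt_sub_of_forall_lt {x w z q β : ℝ}
    (hHcont : ContinuousOn H (Ici 0)) (hHderiv : ∀ x ∈ Ioi (0:ℝ), HasDerivAt H (H' x) x)
    (hx : 0 < x) (hxw : x < w) (hwz : w < z)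
    (hleft : ∀ t ∈ Ioo 0 x, H' t < q) (hright : ∀ t ∈ Ioo w z, H' t < q) (hxq : H' x < q)
    (hq : 0 < q) (hβ : z - (H z - H 0) / q ≤ β) (hwide : β < w - x) :
    H' x * (w - x - β) < H w - H x := by
  have hβq := mul_le_mul_of_nonneg_right hβ hq.le
  rw [sub_mul, div_mul_cancel₀ _ hq.ne'] at hβq
  have hleft' := sub_lt_mul_sub_of_hasDerivAt_lt hHcont hHderiv le_rfl hx hleft
  have hright' := sub_lt_mul_sub_of_hasDerivAt_lt hHcont hHderiv (hx.trans hxw).le hwz hright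
  linarith [mul_lt_mul_of_pos_right hxq (sub_pos.2 hwide)]

theorem sub_sub_mul_lt_sub_of_forall_lt {x y u v : ℝ}
    (hHcont : ContinuousOn H (Ici 0)) (hHderiv : ∀ x ∈ Ioi (0:ℝ), HasDerivAt H (H' x) x)
    (hx : 0 < x) (hxy : x < y) (hv : 0 ≤ v) (hvu : v < u)
    (hdec : ∀ t ∈ Ioo x y, H' t < H' x) (hinc : ∀ t ∈ Ioo v u, H' t < H' x) :
    (H u - H x) - H' x * ((u - x) - (v - y)) < H v - H y := by
  have hxy' := sub_lt_mul_sub_of_hasDerivAt_lt hHcont hHderiv hx.le hxy hdec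
  have hvu' := sub_lt_mul_sub_of_hasDerivAt_lt hHcont hHderiv hv hvu hinc
  linarith

end

theorem stmt_12_general
    (H H' : ℝ → ℝ)
    (hHcont : ContinuousOn H (Set.Ici 0))
    (hHderiv : ∀ x ∈ Set.Ioi (0:ℝ), HasDerivAt H (H' x) x)
    (hH'pos : ∀ x ∈ Set.Ioi (0:ℝ), 0 < H' x)
    (hH'cont : ContinuousOn H' (Set.Ici 0))
    (β : ℝ)
    (astar : ℝ)
    (hH'dec : StrictAntiOn H' (Set.Ioo 0 astar))
    (hH'inc : StrictMonoOn H' (Set.Ioi astar))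
    (hastar0 : 0 < astar)
    (ζ : ℝ → ℝ)
    (hζ : ∀ x ∈ Set.Ioo 0 astar, ζ x ∈ Set.Ioi astar ∧ H' (ζ x) = H' x)
    (c1max : ℝ)
    (hc1max₁ : (∃ x ∈ Set.Ioo 0 astar, ζ x - x ≤ β) →
      c1max = sInf {x | x ∈ Set.Ioo 0 astar ∧ ζ x - x ≤ β})
    (hc1max₂ : (¬ ∃ x ∈ Set.Ioo 0 astar, ζ x - x ≤ β) → c1max = astar)
    (g₁ : ℝ → ℝ) (hg₁ : ∀ x, g₁ x = (H (ζ x) - H x) / (ζ x - x - β))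
    (z₀ βmax : ℝ) (hz₀ : z₀ ∈ Set.Ioi astar ∧ H' z₀ = H' 0)
    (hβmax : βmax = z₀ - (H z₀ - H 0) / H' 0)
    (hβge : βmax ≤ β)
    :
    (∀ x ∈ Set.Ioo 0 c1max, H' x < g₁ x) ∧ StrictMonoOn g₁ (Set.Ioo 0 c1max) := by
  obtain ⟨hz₀mem, hz₀eq⟩ := hz₀
  have hlt0 : ∀ s ∈ Ioo 0 astar, H' s < H' 0 := fun s hs =>
    hH'dec.lt_of_continuousWithinAt_left ((hH'cont 0 self_mem_Ici).mono Ioi_subset_Ici_self) hs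
  have hc1 : ∀ x ∈ Ioo 0 c1max, x ∈ Ioo 0 astar ∧ β < ζ x - x := fun x hx => by
    obtain ⟨hxa, hwide⟩ := mem_Ioo_and_not_of_lt_of_eq_sInf hc1max₁ hc1max₂ hx
    exact ⟨hxa, not_le.1 hwide⟩
  have hq : 0 < H' 0 := hz₀eq ▸ hH'pos z₀ (hastar0.trans hz₀mem)
  have key : ∀ x ∈ Ioo 0 c1max, H' x * (ζ x - x - β) < H (ζ x) - H x := by
    intro x hx
    obtain ⟨hxa, hwide⟩ := hc1 x hx
    obtain ⟨hζmem, hζeq⟩ := hζ x hxa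
    have hζz₀ : ζ x < z₀ := (hH'inc.lt_iff_lt hζmem hz₀mem).1 (hζeq ▸ hz₀eq ▸ hlt0 x hxa)
    refine mul_sub_sub_lt_sub_of_forall_lt hHcont hHderiv hxa.1 (hxa.2.trans hζmem) hζz₀
      (fun t ht => hlt0 t ⟨ht.1, ht.2.trans hxa.2⟩) (fun t ht => ?_) (hlt0 x hxa) hq (hβmax ▸ hβge) hwide
    exact hz₀eq ▸ hH'inc (hζmem.trans ht.1) hz₀mem ht.2
  refine ⟨fun x hx => ?_, fun x hx y hy hxy => ?_⟩
  · rw [hg₁, lt_div_iff₀ (by linarith [(hc1 x hx).2])]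
    exact key x hx
  obtain ⟨⟨hxa, hwx⟩, ⟨hya, hwy⟩⟩ := And.intro (hc1 x hx) (hc1 y hy)
  obtain ⟨⟨hζx, hζxeq⟩, ⟨hζy, hζyeq⟩⟩ := And.intro (hζ x hxa) (hζ y hya)
  have hζyx : ζ y < ζ x :=
    (hH'inc.lt_iff_lt hζy hζx).1 (hζxeq ▸ hζyeq ▸ hH'dec hxa hya hxy)
  have hstep := sub_sub_mul_lt_sub_of_forall_lt hHcont hHderiv hxa.1 hxy
    (hastar0.trans hζy).le hζyx (fun t ht => hH'dec hxa ⟨hxa.1.trans ht.1, ht.2.trans hya.2⟩ ht.1)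
    (fun t ht => hζxeq ▸ hH'inc (hζy.trans ht.1) hζx ht.2)
  rw [hg₁, hg₁]
  exact div_lt_div_of_mul_lt_of_sub_mul_le (by linarith) (by linarith) (key x hx) (by linarith)

theorem stmt_12
    (H H' : ℝ → ℝ)
    (hHcont : ContinuousOn H (Set.Ici 0))
    (hHderiv : ∀ x ∈ Set.Ioi (0:ℝ), HasDerivAt H (H' x) x)
    (hH'pos : ∀ x ∈ Set.Ioi (0:ℝ), 0 < H' x)
    (hH'cont : ContinuousOn H' (Set.Ici 0))
    (hH'top : Filter.Tendsto H' Filter.atTop Filter.atTop)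
    (β : ℝ) (hβ : 0 < β)
    (astar : ℝ) (hastar : 0 ≤ astar)
    (hH'dec : StrictAntiOn H' (Set.Ioo 0 astar))
    (hH'inc : StrictMonoOn H' (Set.Ioi astar))
    (hH'conv : ConvexOn ℝ (Set.Ioi 0) H')
    (hastar0 : 0 < astar)
    (ζ : ℝ → ℝ)
    (hζ : ∀ x ∈ Set.Ioo 0 astar, ζ x ∈ Set.Ioi astar ∧ H' (ζ x) = H' x)
    (c1max : ℝ)
    (hc1max₁ : (∃ x ∈ Set.Ioo 0 astar, ζ x - x ≤ β) →
      c1max = sInf {x | x ∈ Set.Ioo 0 astar ∧ ζ x - x ≤ β})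
    (hc1max₂ : (¬ ∃ x ∈ Set.Ioo 0 astar, ζ x - x ≤ β) → c1max = astar)
    (g₁ : ℝ → ℝ) (hg₁ : ∀ x, g₁ x = (H (ζ x) - H x) / (ζ x - x - β))
    (z₀ βmax : ℝ) (hz₀ : z₀ ∈ Set.Ioi astar ∧ H' z₀ = H' 0)
    (hβmax : βmax = z₀ - (H z₀ - H 0) / H' 0)
    (hc1max0 : 0 < c1max) (hβge : βmax ≤ β)
    :
    (∀ x ∈ Set.Ioo 0 c1max, H' x < g₁ x) ∧ StrictMonoOn g₁ (Set.Ioo 0 c1max) :=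
  stmt_12_general H H' hHcont hHderiv hH'pos hH'cont β astar hH'dec hH'inc hastar0 ζ hζ c1max
    hc1max₁ hc1max₂ g₁ hg₁ z₀ βmax hz₀ hβmax hβge
end

section
/- Assume a* > 0 and 0 < β < β_max. Let c̄ ∈ (0, c₁max) be the unique point with g₁(c̄) = H'(c̄). Then the unique minimizer of g over D is (c̄, ζ(c̄)); in particular, the optimal lower barrier c₁* = c̄ is strictly positive. -/
/-!
Put `m = H'(c̄) = H'(ζ c̄)` and `φ x = H x - m x`. Since `g(d₁, d₂) ≥ m` is equivalent to
`φ d₁ - φ d₂ ≤ m β`, and the defining equation `g₁(c̄) = H'(c̄)` says `φ c̄ - φ (ζ c̄) = m β`,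
minimality of `(c̄, ζ c̄)` amounts to: `(c̄, ζ c̄)` is the unique pair `d₁ < d₂` maximising
the drop `φ d₁ - φ d₂`. This holds because `φ' = H' - m` changes sign exactly at `c̄` and `ζ c̄`,
so `φ` increases up to `c̄`, decreases from `c̄` to `ζ c̄` and increases afterwards.
-/

open Set

section UpDownUp

variable {φ : ℝ → ℝ} {l a b d₁ d₂ : ℝ}
  (hup : StrictMonoOn φ (Icc l a)) (hdown : StrictAntiOn φ (Icc a b))
  (hup' : StrictMonoOn φ (Ici b))
include hup hdown hup'

theorem sub_lt_sub_of_upDownUp (hla : l ≤ a) (hab : a ≤ b) (hd₁ : l ≤ d₁) (hd : d₁ < d₂)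
    (hne : ¬(d₁ = a ∧ d₂ = b)) : φ d₁ - φ d₂ < φ a - φ b := by
  have hmax : ∀ x ∈ Icc l b, φ x ≤ φ a ∧ (x ≠ a → φ x < φ a) := by
    intro x hx
    rcases lt_trichotomy x a with h | rfl | h
    · have := hup ⟨hx.1, h.le⟩ ⟨hla, le_rfl⟩ h
      exact ⟨this.le, fun _ => this⟩
    · exact ⟨le_rfl, fun h => absurd rfl h⟩
    · have := hdown ⟨le_rfl, hab⟩ ⟨h.le, hx.2⟩ h
      exact ⟨this.le, fun _ => this⟩
  have hmin : ∀ x ∈ Ici a, φ b ≤ φ x ∧ (x ≠ b → φ b < φ x) := by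
    intro x hx
    rcases lt_trichotomy x b with h | rfl | h
    · have := hdown ⟨hx, h.le⟩ ⟨hab, le_rfl⟩ h
      exact ⟨this.le, fun _ => this⟩
    · exact ⟨le_rfl, fun h => absurd rfl h⟩
    · have := hup' self_mem_Ici h.le h
      exact ⟨this.le, fun _ => this⟩
  have hdrop : 0 ≤ φ a - φ b := sub_nonneg.2 (hmin a self_mem_Ici).1
  rcases lt_or_ge b d₁ with hbd₁ | hd₁b
  · linarith [hup' hbd₁.le (hbd₁.trans hd).le hd]
  rcases lt_or_ge d₂ a with hd₂a | had₂
  · linarith [hup ⟨hd₁, (hd.trans hd₂a).le⟩ ⟨hd₁.trans hd.le, hd₂a.le⟩ hd]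
  obtain ⟨h₁, h₁'⟩ := hmax d₁ ⟨hd₁, hd₁b⟩
  obtain ⟨h₂, h₂'⟩ := hmin d₂ had₂
  by_cases ha : d₁ = a
  · linarith [h₂' fun hb => hne ⟨ha, hb⟩]
  · linarith [h₁' ha]

theorem sub_le_sub_of_upDownUp (hla : l ≤ a) (hab : a ≤ b) (hd₁ : l ≤ d₁) (hd : d₁ < d₂) :
    φ d₁ - φ d₂ ≤ φ a - φ b := by
  by_cases h : d₁ = a ∧ d₂ = b
  · rw [h.1, h.2]
  · exact (sub_lt_sub_of_upDownUp hup hdown hup' hla hab hd₁ hd h).le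

theorem eq_of_sub_eq_sub_of_upDownUp (hla : l ≤ a) (hab : a ≤ b) (hd₁ : l ≤ d₁) (hd : d₁ < d₂)
    (heq : φ d₁ - φ d₂ = φ a - φ b) : d₁ = a ∧ d₂ = b := by
  by_contra h
  exact (sub_lt_sub_of_upDownUp hup hdown hup' hla hab hd₁ hd h).ne heq

end UpDownUp

section TangentShift

variable {H H' : ℝ → ℝ} {m : ℝ} {D : Set ℝ}

theorem strictMonoOn_sub_mul_of_lt_deriv (hD : Convex ℝ D) (hc : ContinuousOn H D)
    (hd : ∀ x ∈ interior D, HasDerivAt H (H' x) x) (hm : ∀ x ∈ interior D, m < H' x) :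
    StrictMonoOn (fun x => H x - m * x) D :=
  strictMonoOn_of_hasDerivWithinAt_pos hD (hc.sub (continuousOn_const.mul continuousOn_id))
    (fun x hx => ((hd x hx).sub ((hasDerivAt_id x).const_mul m)).hasDerivWithinAt)
    (fun x hx => by simpa using hm x hx)

theorem strictAntiOn_sub_mul_of_deriv_lt (hD : Convex ℝ D) (hc : ContinuousOn H D)
    (hd : ∀ x ∈ interior D, HasDerivAt H (H' x) x) (hm : ∀ x ∈ interior D, H' x < m) :
    StrictAntiOn (fun x => H x - m * x) D :=
  strictAntiOn_of_hasDerivWithinAt_neg hD (hc.sub (continuousOn_const.mul continuousOn_id))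
    (fun x hx => ((hd x hx).sub ((hasDerivAt_id x).const_mul m)).hasDerivWithinAt)
    (fun x hx => by simpa using hm x hx)

end TangentShift

section ValleyShaped

variable {H H' : ℝ → ℝ} {astar c z : ℝ}
  (hHcont : ContinuousOn H (Ici 0)) (hHderiv : ∀ x ∈ Ioi (0:ℝ), HasDerivAt H (H' x) x)
include hHcont hHderiv

theorem strictMonoOn_sub_mul_Icc_zero (hdec : StrictAntiOn H' (Ioo 0 astar))
    (hc : c ∈ Ioo 0 astar) : StrictMonoOn (fun x => H x - H' c * x) (Icc 0 c) := by
  refine strictMonoOn_sub_mul_of_lt_deriv (H' := H') (convex_Icc 0 c)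
    (hHcont.mono Icc_subset_Ici_self) (fun x hx => ?_) (fun x hx => ?_) <;> rw [interior_Icc] at hx
  · exact hHderiv x hx.1
  · exact hdec ⟨hx.1, hx.2.trans hc.2⟩ hc hx.2

theorem strictAntiOn_sub_mul_Icc (hdec : StrictAntiOn H' (Ioo 0 astar))
    (hinc : StrictMonoOn H' (Ioi astar)) (hc : c ∈ Ioo 0 astar) (hz : astar < z)
    (hzc : H' z = H' c) : StrictAntiOn (fun x => H x - H' c * x) (Icc c z) := by
  have hleft : StrictAntiOn (fun x => H x - H' c * x) (Icc c astar) := by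
    refine strictAntiOn_sub_mul_of_deriv_lt (H' := H') (convex_Icc c astar)
      (hHcont.mono fun y hy => hc.1.le.trans hy.1) (fun x hx => ?_) (fun x hx => ?_) <;>
      rw [interior_Icc] at hx
    · exact hHderiv x (hc.1.trans hx.1)
    · exact hdec hc ⟨hc.1.trans hx.1, hx.2⟩ hx.1
  have hright : StrictAntiOn (fun x => H x - H' c * x) (Icc astar z) := by
    refine strictAntiOn_sub_mul_of_deriv_lt (H' := H') (convex_Icc astar z)
      (hHcont.mono fun y hy => (hc.1.trans hc.2).le.trans hy.1) (fun x hx => ?_)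
      (fun x hx => ?_) <;> rw [interior_Icc] at hx
    · exact hHderiv x ((hc.1.trans hc.2).trans hx.1)
    · exact hzc ▸ hinc hx.1 hz hx.2
  rw [← Icc_union_Icc_eq_Icc hc.2.le hz.le]
  exact hleft.union hright (isGreatest_Icc hc.2.le) (isLeast_Icc hz.le)

theorem strictMonoOn_sub_mul_Ici (hinc : StrictMonoOn H' (Ioi astar)) (hastar : 0 < astar)
    (hz : astar < z) : StrictMonoOn (fun x => H x - H' z * x) (Ici z) := by
  refine strictMonoOn_sub_mul_of_lt_deriv (H' := H') (convex_Ici z)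
    (hHcont.mono fun y hy => (hastar.trans hz).le.trans hy) (fun x hx => ?_) (fun x hx => ?_) <;>
    rw [interior_Ici] at hx
  · exact hHderiv x ((hastar.trans hz).trans hx)
  · exact hinc hz (hz.trans hx) hx

end ValleyShaped

theorem le_div_iff_sub_le_mul {m β d₁ d₂ y₁ y₂ : ℝ} (hd : d₁ + β < d₂) :
    m ≤ (y₂ - y₁) / (d₂ - d₁ - β) ↔ (y₁ - m * d₁) - (y₂ - m * d₂) ≤ m * β := by
  rw [le_div_iff₀ (by linarith)]
  constructor <;> intro h <;> linarith

theorem div_eq_iff_sub_eq_mul {m β d₁ d₂ y₁ y₂ : ℝ} (hd : d₁ + β < d₂) :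
    (y₂ - y₁) / (d₂ - d₁ - β) = m ↔ (y₁ - m * d₁) - (y₂ - m * d₂) = m * β := by
  rw [div_eq_iff (by linarith)]
  constructor <;> intro h <;> linarith

theorem lt_and_add_lt_of_mem_Ioo_c1max {ζ : ℝ → ℝ} {β astar c1max x : ℝ}
    (hc1max₁ : (∃ x ∈ Ioo 0 astar, ζ x - x ≤ β) →
      c1max = sInf {x | x ∈ Ioo 0 astar ∧ ζ x - x ≤ β})
    (hc1max₂ : (¬ ∃ x ∈ Ioo 0 astar, ζ x - x ≤ β) → c1max = astar)
    (hx : x ∈ Ioo 0 c1max) : x < astar ∧ x + β < ζ x := by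
  by_cases hS : ∃ y ∈ Ioo 0 astar, ζ y - y ≤ β
  · rw [hc1max₁ hS] at hx
    have hbdd : BddBelow {x | x ∈ Ioo 0 astar ∧ ζ x - x ≤ β} := ⟨0, fun y hy => hy.1.1.le⟩
    obtain ⟨y, hy, hyβ⟩ := hS
    have hlt : x < astar := hx.2.trans_le ((csInf_le hbdd ⟨hy, hyβ⟩).trans hy.2.le)
    refine ⟨hlt, ?_⟩
    by_contra! h
    exact (csInf_le hbdd ⟨⟨hx.1, hlt⟩, by linarith⟩).not_gt hx.2
  · rw [hc1max₂ hS] at hx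
    push Not at hS
    exact ⟨hx.2, by linarith [hS x hx]⟩

theorem stmt_13_general
    (H H' : ℝ → ℝ)
    (hHcont : ContinuousOn H (Set.Ici 0))
    (hHderiv : ∀ x ∈ Set.Ioi (0:ℝ), HasDerivAt H (H' x) x)
    (β : ℝ) (hβ : 0 < β)
    (astar : ℝ)
    (hH'dec : StrictAntiOn H' (Set.Ioo 0 astar))
    (hH'inc : StrictMonoOn H' (Set.Ioi astar))
    (hastar0 : 0 < astar)
    (ζ : ℝ → ℝ)
    (hζ : ∀ x ∈ Set.Ioo 0 astar, ζ x ∈ Set.Ioi astar ∧ H' (ζ x) = H' x)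
    (c1max : ℝ)
    (hc1max₁ : (∃ x ∈ Set.Ioo 0 astar, ζ x - x ≤ β) →
      c1max = sInf {x | x ∈ Set.Ioo 0 astar ∧ ζ x - x ≤ β})
    (hc1max₂ : (¬ ∃ x ∈ Set.Ioo 0 astar, ζ x - x ≤ β) → c1max = astar)
    (g₁ : ℝ → ℝ) (hg₁ : ∀ x, g₁ x = (H (ζ x) - H x) / (ζ x - x - β))
    (cbar : ℝ) (hcbar : cbar ∈ Set.Ioo 0 c1max) (hcbar' : g₁ cbar = H' cbar)
    :
    (0 ≤ cbar ∧ cbar + β < ζ cbar) ∧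
      (∀ d₁ d₂ : ℝ, 0 ≤ d₁ → d₁ + β < d₂ →
        (H (ζ cbar) - H cbar) / (ζ cbar - cbar - β) ≤ (H d₂ - H d₁) / (d₂ - d₁ - β)) ∧
      (∀ c₁ c₂ : ℝ, 0 ≤ c₁ → c₁ + β < c₂ →
        (∀ d₁ d₂ : ℝ, 0 ≤ d₁ → d₁ + β < d₂ →
          (H c₂ - H c₁) / (c₂ - c₁ - β) ≤ (H d₂ - H d₁) / (d₂ - d₁ - β)) →
        c₁ = cbar ∧ c₂ = ζ cbar) ∧
      0 < cbar := by
  obtain ⟨hcbar_lt, hgap⟩ := lt_and_add_lt_of_mem_Ioo_c1max hc1max₁ hc1max₂ hcbar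
  have hcbar_mem : cbar ∈ Ioo 0 astar := ⟨hcbar.1, hcbar_lt⟩
  obtain ⟨hζmem, hζeq⟩ := hζ cbar hcbar_mem
  have hgopt : (H (ζ cbar) - H cbar) / (ζ cbar - cbar - β) = H' cbar := by rw [← hg₁, hcbar']
  have hup := strictMonoOn_sub_mul_Icc_zero hHcont hHderiv hH'dec hcbar_mem
  have hdown := strictAntiOn_sub_mul_Icc hHcont hHderiv hH'dec hH'inc hcbar_mem hζmem hζeq
  have hup' := hζeq ▸ strictMonoOn_sub_mul_Ici hHcont hHderiv hH'inc hastar0 hζmem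
  have hord : cbar ≤ ζ cbar := (hcbar_lt.trans hζmem).le
  have hmin : ∀ d₁ d₂ : ℝ, 0 ≤ d₁ → d₁ + β < d₂ → H' cbar ≤ (H d₂ - H d₁) / (d₂ - d₁ - β) :=
    fun d₁ d₂ hd₁ hd => (le_div_iff_sub_le_mul hd).2 <|
      (div_eq_iff_sub_eq_mul hgap).1 hgopt ▸
        sub_le_sub_of_upDownUp hup hdown hup' hcbar.1.le hord hd₁ (by linarith)
  refine ⟨⟨hcbar.1.le, hgap⟩, hgopt ▸ hmin, fun c₁ c₂ hc₁ hc hopt => ?_, hcbar.1⟩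
  have hc_opt : (H c₂ - H c₁) / (c₂ - c₁ - β) = H' cbar :=
    le_antisymm (hgopt ▸ hopt _ _ hcbar.1.le hgap) (hmin c₁ c₂ hc₁ hc)
  refine eq_of_sub_eq_sub_of_upDownUp hup hdown hup' hcbar.1.le hord hc₁ (by linarith) ?_
  rw [(div_eq_iff_sub_eq_mul hc).1 hc_opt, (div_eq_iff_sub_eq_mul hgap).1 hgopt]

theorem stmt_13
    (H H' : ℝ → ℝ)
    (hHcont : ContinuousOn H (Set.Ici 0))
    (hHderiv : ∀ x ∈ Set.Ioi (0:ℝ), HasDerivAt H (H' x) x)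
    (hH'pos : ∀ x ∈ Set.Ioi (0:ℝ), 0 < H' x)
    (hH'cont : ContinuousOn H' (Set.Ici 0))
    (hH'top : Filter.Tendsto H' Filter.atTop Filter.atTop)
    (β : ℝ) (hβ : 0 < β)
    (astar : ℝ) (hastar : 0 ≤ astar)
    (hH'dec : StrictAntiOn H' (Set.Ioo 0 astar))
    (hH'inc : StrictMonoOn H' (Set.Ioi astar))
    (hH'conv : ConvexOn ℝ (Set.Ioi 0) H')
    (hastar0 : 0 < astar)
    (ζ : ℝ → ℝ)
    (hζ : ∀ x ∈ Set.Ioo 0 astar, ζ x ∈ Set.Ioi astar ∧ H' (ζ x) = H' x)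
    (c1max : ℝ)
    (hc1max₁ : (∃ x ∈ Set.Ioo 0 astar, ζ x - x ≤ β) →
      c1max = sInf {x | x ∈ Set.Ioo 0 astar ∧ ζ x - x ≤ β})
    (hc1max₂ : (¬ ∃ x ∈ Set.Ioo 0 astar, ζ x - x ≤ β) → c1max = astar)
    (g₁ : ℝ → ℝ) (hg₁ : ∀ x, g₁ x = (H (ζ x) - H x) / (ζ x - x - β))
    (z₀ βmax : ℝ) (hz₀ : z₀ ∈ Set.Ioi astar ∧ H' z₀ = H' 0)
    (hβmax : βmax = z₀ - (H z₀ - H 0) / H' 0)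
    (hβlt : β < βmax)
    (cbar : ℝ) (hcbar : cbar ∈ Set.Ioo 0 c1max) (hcbar' : g₁ cbar = H' cbar)
    (hcbaru : ∀ z ∈ Set.Ioo 0 c1max, g₁ z = H' z → z = cbar)
    :
    (0 ≤ cbar ∧ cbar + β < ζ cbar) ∧
      (∀ d₁ d₂ : ℝ, 0 ≤ d₁ → d₁ + β < d₂ →
        (H (ζ cbar) - H cbar) / (ζ cbar - cbar - β) ≤ (H d₂ - H d₁) / (d₂ - d₁ - β)) ∧
      (∀ c₁ c₂ : ℝ, 0 ≤ c₁ → c₁ + β < c₂ →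
        (∀ d₁ d₂ : ℝ, 0 ≤ d₁ → d₁ + β < d₂ →
          (H c₂ - H c₁) / (c₂ - c₁ - β) ≤ (H d₂ - H d₁) / (d₂ - d₁ - β)) →
        c₁ = cbar ∧ c₂ = ζ cbar) ∧
      0 < cbar :=
  stmt_13_general H H' hHcont hHderiv β hβ astar hH'dec hH'inc hastar0 ζ hζ c1max hc1max₁ hc1max₂ g₁
    hg₁ cbar hcbar hcbar'
end

section
/- Fix c₂ > β and suppose (H(c₂) − H(0))/(c₂ − β) < H'(0). Then there exists c₁ ∈ (0, c₂ − β) such that g(c₁, c₂) < g(0, c₂); in particular, (0, c₂) is not a minimizer of g over D. -/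
/-!
If the chord slope `(H c₂ - H 0) / (c₂ - β)` is below `H' 0`, then by continuity of `H'` and the
mean value theorem the chord slope of `H` over a short interval `[0, c₁]` is also above it.
Removing that steep initial piece from the numerator `H c₂ - H 0` and its length `c₁` from the
denominator `c₂ - β` can then only lower the ratio.
-/

open Set Filter Topology

lemma eventually_lt_slope_nhdsGT {f f' : ℝ → ℝ} {a m : ℝ} (hf : ContinuousOn f (Ici a))
    (hderiv : ∀ x ∈ Ioi a, HasDerivAt f (f' x) x) (hf' : ContinuousWithinAt f' (Ici a) a)
    (hm : m < f' a) : ∀ᶠ c in 𝓝[>] a, m < slope f a c := by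
  obtain ⟨u, hau, hu⟩ :=
    mem_nhdsGE_iff_exists_Ico_subset.mp (hf'.eventually (lt_mem_nhds hm))
  filter_upwards [Ioo_mem_nhdsGT hau] with c ⟨hac, hcu⟩
  obtain ⟨ξ, ⟨haξ, hξc⟩, hξ⟩ := exists_hasDerivAt_eq_slope f f' hac
    (hf.mono Icc_subset_Ici_self) fun x hx => hderiv x hx.1
  rw [slope_def_field, ← hξ]
  exact hu ⟨haξ.le, hξc.trans hcu⟩

lemma sub_div_sub_lt_div_of_div_lt {A B x c : ℝ} (hc : 0 < c) (hcB : c < B)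
    (h : A / B < x / c) : (A - x) / (B - c) < A / B := by
  have hB : 0 < B := hc.trans hcB
  rw [div_lt_div_iff₀ hB hc] at h
  rw [div_lt_div_iff₀ (sub_pos.mpr hcB) hB]
  nlinarith

theorem stmt_16_general
    (H H' : ℝ → ℝ)
    (hHcont : ContinuousOn H (Set.Ici 0))
    (hHderiv : ∀ x ∈ Set.Ioi (0:ℝ), HasDerivAt H (H' x) x)
    (hH'cont : ContinuousOn H' (Set.Ici 0))
    (β : ℝ)
    (c₂ : ℝ) (hc₂ : β < c₂) (hlt : (H c₂ - H 0) / (c₂ - β) < H' 0)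
    :
    (∃ c₁ : ℝ, 0 < c₁ ∧ c₁ < c₂ - β ∧
      (H c₂ - H c₁) / (c₂ - c₁ - β) < (H c₂ - H 0) / (c₂ - β)) ∧
      ¬ ∀ d₁ d₂ : ℝ, 0 ≤ d₁ → d₁ + β < d₂ →
        (H c₂ - H 0) / (c₂ - 0 - β) ≤ (H d₂ - H d₁) / (d₂ - d₁ - β) := by
  obtain ⟨c₁, ⟨hc₁, hc₁lt⟩, hslope⟩ :=
    (Eventually.and (Ioo_mem_nhdsGT (sub_pos.mpr hc₂))
      (eventually_lt_slope_nhdsGT hHcont hHderiv (hH'cont 0 self_mem_Ici) hlt)).exists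
  rw [slope_def_field, sub_zero] at hslope
  have hdrop : (H c₂ - H c₁) / (c₂ - c₁ - β) < (H c₂ - H 0) / (c₂ - β) := by
    have := sub_div_sub_lt_div_of_div_lt hc₁ hc₁lt hslope
    rwa [sub_sub_sub_cancel_right, sub_right_comm] at this
  refine ⟨⟨c₁, hc₁, hc₁lt, hdrop⟩, fun hmin => ?_⟩
  have := hmin c₁ c₂ hc₁.le (by linarith)
  rw [sub_zero] at this
  exact this.not_gt hdrop

theorem stmt_16
    (H H' : ℝ → ℝ)
    (hHcont : ContinuousOn H (Set.Ici 0))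
    (hHderiv : ∀ x ∈ Set.Ioi (0:ℝ), HasDerivAt H (H' x) x)
    (hH'pos : ∀ x ∈ Set.Ioi (0:ℝ), 0 < H' x)
    (hH'cont : ContinuousOn H' (Set.Ici 0))
    (hH'top : Filter.Tendsto H' Filter.atTop Filter.atTop)
    (β : ℝ) (hβ : 0 < β)
    (c₂ : ℝ) (hc₂ : β < c₂) (hlt : (H c₂ - H 0) / (c₂ - β) < H' 0)
    :
    (∃ c₁ : ℝ, 0 < c₁ ∧ c₁ < c₂ - β ∧
      (H c₂ - H c₁) / (c₂ - c₁ - β) < (H c₂ - H 0) / (c₂ - β)) ∧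
      ¬ ∀ d₁ d₂ : ℝ, 0 ≤ d₁ → d₁ + β < d₂ →
        (H c₂ - H 0) / (c₂ - 0 - β) ≤ (H d₂ - H d₁) / (d₂ - d₁ - β) :=
  stmt_16_general H H' hHcont hHderiv hH'cont β c₂ hc₂ hlt
end
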